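/- arXiv:0910.5084 — 9 statements merged into one kernel-verified Lean document; each statement's English description precedes it below -/
import Mathlib

section
/- For all t, t₀ ∈ I one has ∂ₜs(t,t₀) = c(t₀,t); that is, the time derivative of the 'sine-type' fundamental solution at time t equals the 'cosine-type' fundamental solution based at t with its two time arguments exchanged. -/
/-!
For two solutions `u, v` of `u'' + κ u = 0` the Wronskian `u v' - u' v` has derivative
`u v'' - u'' v = -κ u v + κ u v = 0`, so it is constant on the interval. For
`u = c(·, t)` and `v = s(·, t₀)` its value at `t` is `s'(t, t₀)`, by the initial conditions of
`c(·, t)`, and its value at `t₀` is `c(t₀, t)`, by those of `s(·, t₀)`.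
-/

def wronskian (u u' v v' : ℝ → ℝ) (x : ℝ) : ℝ := u x * v' x - u' x * v x

theorem hasDerivAt_wronskian {κ u u' v v' : ℝ → ℝ} {x : ℝ}
    (hu : HasDerivAt u (u' x) x) (hu' : HasDerivAt u' (-(κ x * u x)) x)
    (hv : HasDerivAt v (v' x) x) (hv' : HasDerivAt v' (-(κ x * v x)) x) :
    HasDerivAt (wronskian u u' v v') 0 x :=
  ((hu.mul hv').sub (hu'.mul hv)).congr_deriv (by ring)

theorem Set.OrdConnected.eq_of_hasDerivAt_eq_zero {I : Set ℝ} (hI : I.OrdConnected)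
    {f : ℝ → ℝ} (hf : ∀ x ∈ I, HasDerivAt f 0 x) {x y : ℝ} (hx : x ∈ I) (hy : y ∈ I) :
    f x = f y := by
  have h := hI.convex.norm_image_sub_le_of_norm_hasDerivWithin_le
    (fun z hz => (hf z hz).hasDerivWithinAt) (fun _ _ => norm_zero.le) hy hx
  rw [zero_mul, norm_le_zero_iff, sub_eq_zero] at h
  exact h

theorem wronskian_eq_of_ordConnected {I : Set ℝ} (hI : I.OrdConnected)
    {κ u u' v v' : ℝ → ℝ}
    (hu : ∀ x ∈ I, HasDerivAt u (u' x) x) (hu' : ∀ x ∈ I, HasDerivAt u' (-(κ x * u x)) x)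
    (hv : ∀ x ∈ I, HasDerivAt v (v' x) x) (hv' : ∀ x ∈ I, HasDerivAt v' (-(κ x * v x)) x)
    {x y : ℝ} (hx : x ∈ I) (hy : y ∈ I) :
    wronskian u u' v v' x = wronskian u u' v v' y :=
  hI.eq_of_hasDerivAt_eq_zero
    (fun z hz => hasDerivAt_wronskian (hu z hz) (hu' z hz) (hv z hz) (hv' z hz)) hx hy

theorem stmt_1_general
    (I : Set ℝ) (hIconn : I.OrdConnected)
    (κ : ℝ → ℝ)
    (c s c' s' : ℝ → ℝ → ℝ)
    (hcderiv : ∀ t₀ ∈ I, ∀ t ∈ I, HasDerivAt (fun u => c u t₀) (c' t t₀) t)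
    (hcderiv2 : ∀ t₀ ∈ I, ∀ t ∈ I, HasDerivAt (fun u => c' u t₀) (-(κ t * c t t₀)) t)
    (hsderiv : ∀ t₀ ∈ I, ∀ t ∈ I, HasDerivAt (fun u => s u t₀) (s' t t₀) t)
    (hsderiv2 : ∀ t₀ ∈ I, ∀ t ∈ I, HasDerivAt (fun u => s' u t₀) (-(κ t * s t t₀)) t)
    (hcinit : ∀ t₀ ∈ I, c t₀ t₀ = 1) (hcinit' : ∀ t₀ ∈ I, c' t₀ t₀ = 0)
    (hsinit : ∀ t₀ ∈ I, s t₀ t₀ = 0) (hsinit' : ∀ t₀ ∈ I, s' t₀ t₀ = 1) :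
    ∀ t ∈ I, ∀ t₀ ∈ I, s' t t₀ = c t₀ t := by
  intro t ht t₀ ht₀
  have h := wronskian_eq_of_ordConnected hIconn (hcderiv t ht) (hcderiv2 t ht)
    (hsderiv t₀ ht₀) (hsderiv2 t₀ ht₀) ht ht₀
  simpa [wronskian, hcinit t ht, hcinit' t ht, hsinit t₀ ht₀, hsinit' t₀ ht₀] using h

/-- For the fundamental solutions of the TDHO equation
`u'' + κ u = 0` on an open interval `I`, one has `∂ₜs(t,t₀) = c(t₀,t)` for all
`t, t₀ ∈ I`: the time derivative of the sine-type fundamental solution equals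
the cosine-type fundamental solution with its two time arguments exchanged. -/
theorem stmt_1
    (I : Set ℝ) (hIopen : IsOpen I) (hIconn : I.OrdConnected)
    (κ : ℝ → ℝ) (hκ : ContinuousOn κ I)
    (c s c' s' : ℝ → ℝ → ℝ)
    (hcderiv : ∀ t₀ ∈ I, ∀ t ∈ I, HasDerivAt (fun u => c u t₀) (c' t t₀) t)
    (hcderiv2 : ∀ t₀ ∈ I, ∀ t ∈ I, HasDerivAt (fun u => c' u t₀) (-(κ t * c t t₀)) t)
    (hsderiv : ∀ t₀ ∈ I, ∀ t ∈ I, HasDerivAt (fun u => s u t₀) (s' t t₀) t)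
    (hsderiv2 : ∀ t₀ ∈ I, ∀ t ∈ I, HasDerivAt (fun u => s' u t₀) (-(κ t * s t t₀)) t)
    (hcinit : ∀ t₀ ∈ I, c t₀ t₀ = 1) (hcinit' : ∀ t₀ ∈ I, c' t₀ t₀ = 0)
    (hsinit : ∀ t₀ ∈ I, s t₀ t₀ = 0) (hsinit' : ∀ t₀ ∈ I, s' t₀ t₀ = 1) :
    ∀ t ∈ I, ∀ t₀ ∈ I, s' t t₀ = c t₀ t :=
  stmt_1_general I hIconn κ c s c' s' hcderiv hcderiv2 hsderiv hsderiv2 hcinit hcinit' hsinit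
    hsinit'
end

section
/- The sine-type fundamental solutions based at different times satisfy the addition formula s(t₂,t₁) = c(t₁,t₀)·s(t₂,t₀) − c(t₂,t₀)·s(t₁,t₀) for all t₀, t₁, t₂ ∈ I (generalizing the sine-of-a-difference formula of the constant-frequency case). -/
/-!
For solutions `u, v` of `u'' + κ u = 0` the Wronskian `u v' - u' v` is constant. Write
`c = c(·,t₀)`, `s = s(·,t₀)` and `u = s(·,t₁)`. Then `W(c, s) ≡ 1`, while evaluating at `t₁`
gives `W(u, s) ≡ -s(t₁,t₀)` and `W(u, c) ≡ -c(t₁,t₀)`. The algebraic identity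
`u · W(c, s) = c · W(u, s) - s · W(u, c)` is the addition formula.
-/

theorem Convex.is_const_of_hasDerivWithinAt_zero {I : Set ℝ} (hI : Convex ℝ I) {f : ℝ → ℝ}
    (hf : ∀ t ∈ I, HasDerivWithinAt f 0 I t) {x y : ℝ} (hx : x ∈ I) (hy : y ∈ I) :
    f x = f y := by
  have h := hI.norm_image_sub_le_of_norm_hasDerivWithin_le (C := 0) hf (by simp) hy hx
  rw [zero_mul, norm_le_zero_iff, sub_eq_zero] at h
  exact h

theorem Convex.wronskian_eq {I : Set ℝ} (hI : Convex ℝ I) {κ u u' v v' : ℝ → ℝ}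
    (hu : ∀ t ∈ I, HasDerivAt u (u' t) t) (hu' : ∀ t ∈ I, HasDerivAt u' (-(κ t * u t)) t)
    (hv : ∀ t ∈ I, HasDerivAt v (v' t) t) (hv' : ∀ t ∈ I, HasDerivAt v' (-(κ t * v t)) t)
    {x y : ℝ} (hx : x ∈ I) (hy : y ∈ I) :
    u x * v' x - u' x * v x = u y * v' y - u' y * v y := by
  refine hI.is_const_of_hasDerivWithinAt_zero (f := fun t => u t * v' t - u' t * v t)
    (fun t ht => ?_) hx hy
  have h := ((hu t ht).mul (hv' t ht)).sub ((hu' t ht).mul (hv t ht))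
  exact h.hasDerivWithinAt.congr_deriv (by ring)

theorem stmt_4_general
    (I : Set ℝ) (hIconn : I.OrdConnected)
    (κ : ℝ → ℝ)
    (c s c' s' : ℝ → ℝ → ℝ)
    (hcderiv : ∀ t₀ ∈ I, ∀ t ∈ I, HasDerivAt (fun u => c u t₀) (c' t t₀) t)
    (hcderiv2 : ∀ t₀ ∈ I, ∀ t ∈ I, HasDerivAt (fun u => c' u t₀) (-(κ t * c t t₀)) t)
    (hsderiv : ∀ t₀ ∈ I, ∀ t ∈ I, HasDerivAt (fun u => s u t₀) (s' t t₀) t)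
    (hsderiv2 : ∀ t₀ ∈ I, ∀ t ∈ I, HasDerivAt (fun u => s' u t₀) (-(κ t * s t t₀)) t)
    (hcinit : ∀ t₀ ∈ I, c t₀ t₀ = 1) (hcinit' : ∀ t₀ ∈ I, c' t₀ t₀ = 0)
    (hsinit : ∀ t₀ ∈ I, s t₀ t₀ = 0) (hsinit' : ∀ t₀ ∈ I, s' t₀ t₀ = 1) :
    ∀ t₀ ∈ I, ∀ t₁ ∈ I, ∀ t₂ ∈ I,
      s t₂ t₁ = c t₁ t₀ * s t₂ t₀ - c t₂ t₀ * s t₁ t₀ := by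
  intro t₀ h₀ t₁ h₁ t₂ h₂
  have hI : Convex ℝ I := hIconn.convex
  have hcs := hI.wronskian_eq (hcderiv t₀ h₀) (hcderiv2 t₀ h₀) (hsderiv t₀ h₀) (hsderiv2 t₀ h₀)
    h₂ h₀
  have hus := hI.wronskian_eq (hsderiv t₁ h₁) (hsderiv2 t₁ h₁) (hsderiv t₀ h₀) (hsderiv2 t₀ h₀)
    h₂ h₁
  have huc := hI.wronskian_eq (hsderiv t₁ h₁) (hsderiv2 t₁ h₁) (hcderiv t₀ h₀) (hcderiv2 t₀ h₀)
    h₂ h₁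
  rw [hcinit t₀ h₀, hcinit' t₀ h₀, hsinit t₀ h₀, hsinit' t₀ h₀] at hcs
  rw [hsinit t₁ h₁, hsinit' t₁ h₁] at hus huc
  linear_combination -s t₂ t₁ * hcs + c t₂ t₀ * hus - s t₂ t₀ * huc

/-- The sine-type fundamental solutions of the TDHO equation
`u'' + κ u = 0` on an open interval `I`, based at different times, satisfy the
addition formula `s(t₂,t₁) = c(t₁,t₀)·s(t₂,t₀) − c(t₂,t₀)·s(t₁,t₀)` for all
`t₀, t₁, t₂ ∈ I`. -/
theorem stmt_4
    (I : Set ℝ) (hIopen : IsOpen I) (hIconn : I.OrdConnected)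
    (κ : ℝ → ℝ) (hκ : ContinuousOn κ I)
    (c s c' s' : ℝ → ℝ → ℝ)
    (hcderiv : ∀ t₀ ∈ I, ∀ t ∈ I, HasDerivAt (fun u => c u t₀) (c' t t₀) t)
    (hcderiv2 : ∀ t₀ ∈ I, ∀ t ∈ I, HasDerivAt (fun u => c' u t₀) (-(κ t * c t t₀)) t)
    (hsderiv : ∀ t₀ ∈ I, ∀ t ∈ I, HasDerivAt (fun u => s u t₀) (s' t t₀) t)
    (hsderiv2 : ∀ t₀ ∈ I, ∀ t ∈ I, HasDerivAt (fun u => s' u t₀) (-(κ t * s t t₀)) t)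
    (hcinit : ∀ t₀ ∈ I, c t₀ t₀ = 1) (hcinit' : ∀ t₀ ∈ I, c' t₀ t₀ = 0)
    (hsinit : ∀ t₀ ∈ I, s t₀ t₀ = 0) (hsinit' : ∀ t₀ ∈ I, s' t₀ t₀ = 1) :
    ∀ t₀ ∈ I, ∀ t₁ ∈ I, ∀ t₂ ∈ I,
      s t₂ t₁ = c t₁ t₀ * s t₂ t₀ - c t₂ t₀ * s t₁ t₀ :=
  stmt_4_general I hIconn κ c s c' s' hcderiv hcderiv2 hsderiv hsderiv2 hcinit hcinit' hsinit
    hsinit'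
end

section
/- Let u₁, u₂ : I → ℝ be twice-differentiable solutions of the TDHO equation whose (constant) Wronskian W := u₁·u₂' − u₁'·u₂ is nonzero, and let b₁₁, b₁₂, b₂₂ ∈ ℝ satisfy b₁₁ > 0 and b₁₁·b₂₂ − b₁₂² = W⁻². Then Q(t) := b₁₁·u₁(t)² + b₂₂·u₂(t)² + 2·b₁₂·u₁(t)·u₂(t) is strictly positive for every t ∈ I, and the function ρ := √Q is twice differentiable on I and satisfies the Ermakov–Pinney equation ρ''(t) + κ(t)·ρ(t) = 1/ρ(t)³. -/
/-!
Write `Q = ⟨B u, u⟩` for the positive definite matrix `B = (bᵢⱼ)` and `u = (u₁, u₂)`, and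
`R = ⟨B u, u'⟩`, `P = ⟨B u', u'⟩`. Then `Q' = 2R` and, since `u'' = -κ u`, `R' = P - κ Q`.
For `ρ = √Q` one has `ρ'' = (2 Q Q'' - Q'²) / (4 ρ³) = (Q P - R² - κ Q²) / ρ³`, and the
Lagrange identity `Q P - R² = det B · W²` makes the numerator `1 - κ ρ⁴`.
-/

section BinaryForm

variable (b₁₁ b₁₂ b₂₂ : ℝ)

def quadForm (x₁ x₂ : ℝ) : ℝ :=
  b₁₁ * x₁ ^ 2 + b₂₂ * x₂ ^ 2 + 2 * b₁₂ * x₁ * x₂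

def polarForm (x₁ x₂ y₁ y₂ : ℝ) : ℝ :=
  b₁₁ * x₁ * y₁ + b₁₂ * (x₁ * y₂ + x₂ * y₁) + b₂₂ * x₂ * y₂

variable {b₁₁ b₁₂ b₂₂}

theorem quadForm_pos {x₁ x₂ : ℝ} (hb₁₁ : 0 < b₁₁) (hdet : 0 < b₁₁ * b₂₂ - b₁₂ ^ 2)
    (hx : x₁ ≠ 0 ∨ x₂ ≠ 0) : 0 < quadForm b₁₁ b₁₂ b₂₂ x₁ x₂ := by
  have hcompl : b₁₁ * quadForm b₁₁ b₁₂ b₂₂ x₁ x₂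
      = (b₁₁ * x₁ + b₁₂ * x₂) ^ 2 + (b₁₁ * b₂₂ - b₁₂ ^ 2) * x₂ ^ 2 := by
    unfold quadForm; ring
  refine pos_of_mul_pos_right (a := b₁₁) ?_ hb₁₁.le
  rw [hcompl]
  rcases eq_or_ne x₂ 0 with rfl | hx₂
  · have hx₁ : x₁ ≠ 0 := by simpa using hx
    exact lt_add_of_pos_of_le (sq_pos_of_ne_zero (by simpa using mul_ne_zero hb₁₁.ne' hx₁)) (by simp)
  · exact lt_add_of_le_of_pos (sq_nonneg _) (mul_pos hdet (sq_pos_of_ne_zero hx₂))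

theorem quadForm_mul_quadForm_sub_polarForm_sq (x₁ x₂ y₁ y₂ : ℝ) :
    quadForm b₁₁ b₁₂ b₂₂ x₁ x₂ * quadForm b₁₁ b₁₂ b₂₂ y₁ y₂ - polarForm b₁₁ b₁₂ b₂₂ x₁ x₂ y₁ y₂ ^ 2
      = (b₁₁ * b₂₂ - b₁₂ ^ 2) * (x₁ * y₂ - y₁ * x₂) ^ 2 := by
  unfold quadForm polarForm; ring

theorem hasDerivAt_polarForm {f₁ f₂ g₁ g₂ : ℝ → ℝ} {f₁' f₂' g₁' g₂' t : ℝ}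
    (hf₁ : HasDerivAt f₁ f₁' t) (hf₂ : HasDerivAt f₂ f₂' t)
    (hg₁ : HasDerivAt g₁ g₁' t) (hg₂ : HasDerivAt g₂ g₂' t) :
    HasDerivAt (fun s => polarForm b₁₁ b₁₂ b₂₂ (f₁ s) (f₂ s) (g₁ s) (g₂ s))
      (polarForm b₁₁ b₁₂ b₂₂ f₁' f₂' (g₁ t) (g₂ t)
        + polarForm b₁₁ b₁₂ b₂₂ (f₁ t) (f₂ t) g₁' g₂') t := by
  unfold polarForm
  exact (((hf₁.const_mul b₁₁).mul hg₁).add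
    (((hf₁.mul hg₂).add (hf₂.mul hg₁)).const_mul b₁₂)).add ((hf₂.const_mul b₂₂).mul hg₂)
    |>.congr_deriv (by ring)

theorem hasDerivAt_quadForm {f₁ f₂ : ℝ → ℝ} {f₁' f₂' t : ℝ}
    (hf₁ : HasDerivAt f₁ f₁' t) (hf₂ : HasDerivAt f₂ f₂' t) :
    HasDerivAt (fun s => quadForm b₁₁ b₁₂ b₂₂ (f₁ s) (f₂ s))
      (2 * polarForm b₁₁ b₁₂ b₂₂ (f₁ t) (f₂ t) f₁' f₂') t := by
  unfold quadForm polarForm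
  exact ((hf₁.pow 2).const_mul b₁₁).add ((hf₂.pow 2).const_mul b₂₂)
    |>.add ((hf₁.const_mul (2 * b₁₂)).mul hf₂) |>.congr_deriv (by ring)

theorem hasDerivAt_polarForm_of_oscillator {u₁ u₂ u₁' u₂' : ℝ → ℝ} {k t : ℝ}
    (hu₁ : HasDerivAt u₁ (u₁' t) t) (hu₂ : HasDerivAt u₂ (u₂' t) t)
    (hu₁' : HasDerivAt u₁' (-(k * u₁ t)) t) (hu₂' : HasDerivAt u₂' (-(k * u₂ t)) t) :
    HasDerivAt (fun s => polarForm b₁₁ b₁₂ b₂₂ (u₁ s) (u₂ s) (u₁' s) (u₂' s))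
      (quadForm b₁₁ b₁₂ b₂₂ (u₁' t) (u₂' t) - k * quadForm b₁₁ b₁₂ b₂₂ (u₁ t) (u₂ t)) t :=
  (hasDerivAt_polarForm hu₁ hu₂ hu₁' hu₂').congr_deriv (by unfold polarForm quadForm; ring)

end BinaryForm

theorem hasDerivAt_div_sqrt_of_mul_sub_sq_eq_one {Q R : ℝ → ℝ} {P k t : ℝ}
    (hQ : HasDerivAt Q (2 * R t) t) (hR : HasDerivAt R (P - k * Q t) t) (hpos : 0 < Q t)
    (hlagrange : Q t * P - R t ^ 2 = 1) :
    HasDerivAt (fun s => R s / √(Q s)) (1 / √(Q t) ^ 3 - k * √(Q t)) t := by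
  have hsqrt : 0 < √(Q t) := Real.sqrt_pos.2 hpos
  refine (hR.div (hQ.sqrt hpos.ne') hsqrt.ne').congr_deriv ?_
  have hsq := Real.sq_sqrt hpos.le
  generalize √(Q t) = ρ at *
  rw [← hsq] at hlagrange ⊢
  field_simp
  linear_combination hlagrange

theorem stmt_5_general
    (I : Set ℝ)
    (κ : ℝ → ℝ)
    (u₁ u₂ u₁' u₂' : ℝ → ℝ)
    (hu₁d : ∀ t ∈ I, HasDerivAt u₁ (u₁' t) t)
    (hu₁dd : ∀ t ∈ I, HasDerivAt u₁' (-(κ t * u₁ t)) t)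
    (hu₂d : ∀ t ∈ I, HasDerivAt u₂ (u₂' t) t)
    (hu₂dd : ∀ t ∈ I, HasDerivAt u₂' (-(κ t * u₂ t)) t)
    (W : ℝ) (hW : W ≠ 0)
    (hWdef : ∀ t ∈ I, u₁ t * u₂' t - u₁' t * u₂ t = W)
    (b₁₁ b₁₂ b₂₂ : ℝ) (hb₁₁ : 0 < b₁₁)
    (hdet : b₁₁ * b₂₂ - b₁₂ ^ 2 = (W ^ 2)⁻¹) :
    (∀ t ∈ I, 0 < b₁₁ * u₁ t ^ 2 + b₂₂ * u₂ t ^ 2 + 2 * b₁₂ * u₁ t * u₂ t) ∧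
    ∃ ρ' : ℝ → ℝ,
      (∀ t ∈ I, HasDerivAt
        (fun u => Real.sqrt (b₁₁ * u₁ u ^ 2 + b₂₂ * u₂ u ^ 2 + 2 * b₁₂ * u₁ u * u₂ u))
        (ρ' t) t) ∧
      (∀ t ∈ I, HasDerivAt ρ'
        (1 / Real.sqrt (b₁₁ * u₁ t ^ 2 + b₂₂ * u₂ t ^ 2 + 2 * b₁₂ * u₁ t * u₂ t) ^ 3
          - κ t * Real.sqrt (b₁₁ * u₁ t ^ 2 + b₂₂ * u₂ t ^ 2 + 2 * b₁₂ * u₁ t * u₂ t)) t) := by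
  have hdet_pos : 0 < b₁₁ * b₂₂ - b₁₂ ^ 2 := hdet ▸ by positivity
  have hQ_pos (t : ℝ) (ht : t ∈ I) : 0 < quadForm b₁₁ b₁₂ b₂₂ (u₁ t) (u₂ t) := by
    refine quadForm_pos hb₁₁ hdet_pos ?_
    by_contra! hu
    exact hW (by rw [← hWdef t ht, hu.1, hu.2]; ring)
  have hlagrange (t : ℝ) (ht : t ∈ I) :
      quadForm b₁₁ b₁₂ b₂₂ (u₁ t) (u₂ t) * quadForm b₁₁ b₁₂ b₂₂ (u₁' t) (u₂' t)
        - polarForm b₁₁ b₁₂ b₂₂ (u₁ t) (u₂ t) (u₁' t) (u₂' t) ^ 2 = 1 := by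
    rw [quadForm_mul_quadForm_sub_polarForm_sq, hWdef t ht, hdet, inv_mul_cancel₀ (by positivity)]
  have hQd (t : ℝ) (ht : t ∈ I) := hasDerivAt_quadForm (b₁₁ := b₁₁) (b₁₂ := b₁₂) (b₂₂ := b₂₂)
    (hu₁d t ht) (hu₂d t ht)
  refine ⟨hQ_pos, fun s => polarForm b₁₁ b₁₂ b₂₂ (u₁ s) (u₂ s) (u₁' s) (u₂' s)
      / √(quadForm b₁₁ b₁₂ b₂₂ (u₁ s) (u₂ s)), fun t ht => ?_, fun t ht => ?_⟩
  · exact ((hQd t ht).sqrt (hQ_pos t ht).ne').congr_deriv (mul_div_mul_left _ _ two_ne_zero)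
  · exact hasDerivAt_div_sqrt_of_mul_sub_sq_eq_one (hQd t ht)
      (hasDerivAt_polarForm_of_oscillator (hu₁d t ht) (hu₂d t ht) (hu₁dd t ht) (hu₂dd t ht))
      (hQ_pos t ht) (hlagrange t ht)

/-- Let `u₁, u₂` be twice-differentiable solutions of the TDHO
equation `u'' + κ u = 0` on an open interval `I` whose (constant) Wronskian
`W = u₁ u₂' − u₁' u₂` is nonzero, and let `b₁₁, b₁₂, b₂₂ ∈ ℝ` with `b₁₁ > 0` and
`b₁₁ b₂₂ − b₁₂² = W⁻²`. Then `Q := b₁₁ u₁² + b₂₂ u₂² + 2 b₁₂ u₁ u₂` is strictly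
positive on `I`, and `ρ := √Q` is twice differentiable on `I` and satisfies the
Ermakov–Pinney equation `ρ'' + κ ρ = 1/ρ³`. -/
theorem stmt_5
    (I : Set ℝ) (hIopen : IsOpen I) (hIconn : I.OrdConnected)
    (κ : ℝ → ℝ) (hκ : ContinuousOn κ I)
    (u₁ u₂ u₁' u₂' : ℝ → ℝ)
    (hu₁d : ∀ t ∈ I, HasDerivAt u₁ (u₁' t) t)
    (hu₁dd : ∀ t ∈ I, HasDerivAt u₁' (-(κ t * u₁ t)) t)
    (hu₂d : ∀ t ∈ I, HasDerivAt u₂ (u₂' t) t)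
    (hu₂dd : ∀ t ∈ I, HasDerivAt u₂' (-(κ t * u₂ t)) t)
    (W : ℝ) (hW : W ≠ 0)
    (hWdef : ∀ t ∈ I, u₁ t * u₂' t - u₁' t * u₂ t = W)
    (b₁₁ b₁₂ b₂₂ : ℝ) (hb₁₁ : 0 < b₁₁)
    (hdet : b₁₁ * b₂₂ - b₁₂ ^ 2 = (W ^ 2)⁻¹) :
    (∀ t ∈ I, 0 < b₁₁ * u₁ t ^ 2 + b₂₂ * u₂ t ^ 2 + 2 * b₁₂ * u₁ t * u₂ t) ∧
    ∃ ρ' : ℝ → ℝ,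
      (∀ t ∈ I, HasDerivAt
        (fun u => Real.sqrt (b₁₁ * u₁ u ^ 2 + b₂₂ * u₂ u ^ 2 + 2 * b₁₂ * u₁ u * u₂ u))
        (ρ' t) t) ∧
      (∀ t ∈ I, HasDerivAt ρ'
        (1 / Real.sqrt (b₁₁ * u₁ t ^ 2 + b₂₂ * u₂ t ^ 2 + 2 * b₁₂ * u₁ t * u₂ t) ^ 3
          - κ t * Real.sqrt (b₁₁ * u₁ t ^ 2 + b₂₂ * u₂ t ^ 2 + 2 * b₁₂ * u₁ t * u₂ t)) t) :=
  stmt_5_general I κ u₁ u₂ u₁' u₂' hu₁d hu₁dd hu₂d hu₂dd W hW hWdef b₁₁ b₁₂ b₂₂ hb₁₁ hdet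
end

section
/- Let ρ : I → (0,∞) be a twice-differentiable solution of the Ermakov–Pinney equation and fix t₀ ∈ I. Define θ(t) := ∫_{t₀}^{t} ρ(τ)⁻² dτ and set c̃(t) := (ρ(t)/ρ(t₀))·cos θ(t) − ρ(t)·ρ'(t₀)·sin θ(t) and s̃(t) := ρ(t)·ρ(t₀)·sin θ(t). Then c̃ and s̃ are twice-differentiable solutions of the TDHO equation u'' + κ·u = 0 on I satisfying c̃(t₀) = 1, c̃'(t₀) = 0, s̃(t₀) = 0, s̃'(t₀) = 1; i.e. they are the fundamental solutions c(·,t₀) and s(·,t₀). -/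
/-!
With the phase `θ = ∫_{t₀}^{t} ρ⁻²`, every `u = ρ (a cos θ + b sin θ)` solves the oscillator
equation: since `θ' = ρ⁻²`, `u' = ρ' (a cos θ + b sin θ) + (b cos θ - a sin θ) / ρ`, and in `u''`
the term `ρ'' (a cos θ + b sin θ) = (ρ⁻³ - κ ρ) (a cos θ + b sin θ)` has its `ρ⁻³` part cancelled
by the derivative of `(b cos θ - a sin θ) / ρ`, leaving `u'' = -κ u`. As `θ(t₀) = 0`, the initial
data are `u(t₀) = a ρ(t₀)`, `u'(t₀) = a ρ'(t₀) + b / ρ(t₀)`, and `c̃`, `s̃` are the cases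
`(a, b) = (ρ(t₀)⁻¹, -ρ'(t₀))` and `(0, ρ(t₀))`.
-/

open Real

theorem hasDerivAt_intervalIntegral_of_continuousOn {E : Type*} [NormedAddCommGroup E]
    [NormedSpace ℝ E] [CompleteSpace E] {I : Set ℝ} (hIopen : IsOpen I) (hIconn : I.OrdConnected)
    {f : ℝ → E} (hf : ContinuousOn f I) {t₀ t : ℝ} (ht₀ : t₀ ∈ I) (ht : t ∈ I) :
    HasDerivAt (fun t => ∫ τ in t₀..t, f τ) (f t) t :=
  intervalIntegral.integral_hasDerivAt_right
    ((hf.mono (hIconn.uIcc_subset ht₀ ht)).intervalIntegrable)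
    (hf.stronglyMeasurableAtFilter hIopen t ht) (hf.continuousAt (hIopen.mem_nhds ht))

theorem hasDerivAt_cos_add_sin {θ : ℝ → ℝ} {θ' t : ℝ} (hθ : HasDerivAt θ θ' t) (a b : ℝ) :
    HasDerivAt (fun t => a * cos (θ t) + b * sin (θ t))
      ((b * cos (θ t) - a * sin (θ t)) * θ') t := by
  refine ((hθ.cos.const_mul a).add (hθ.sin.const_mul b)).congr_deriv ?_
  ring

noncomputable def milneSolution (ρ θ : ℝ → ℝ) (a b t : ℝ) : ℝ :=
  ρ t * (a * cos (θ t) + b * sin (θ t))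

noncomputable def milneSolutionDeriv (ρ ρ' θ : ℝ → ℝ) (a b t : ℝ) : ℝ :=
  ρ' t * (a * cos (θ t) + b * sin (θ t)) + (b * cos (θ t) - a * sin (θ t)) / ρ t

section MilneSolution

variable {ρ ρ' θ : ℝ → ℝ} {t : ℝ}

theorem hasDerivAt_milneSolution (hρ : HasDerivAt ρ (ρ' t) t) (hθ : HasDerivAt θ (ρ t ^ 2)⁻¹ t)
    (hρt : ρ t ≠ 0) (a b : ℝ) :
    HasDerivAt (milneSolution ρ θ a b) (milneSolutionDeriv ρ ρ' θ a b t) t := by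
  refine (hρ.mul (hasDerivAt_cos_add_sin hθ a b)).congr_deriv ?_
  unfold milneSolutionDeriv
  field_simp

theorem hasDerivAt_milneSolutionDeriv {k : ℝ} (hρ : HasDerivAt ρ (ρ' t) t)
    (hρ' : HasDerivAt ρ' (1 / ρ t ^ 3 - k * ρ t) t) (hθ : HasDerivAt θ (ρ t ^ 2)⁻¹ t)
    (hρt : ρ t ≠ 0) (a b : ℝ) :
    HasDerivAt (milneSolutionDeriv ρ ρ' θ a b) (-(k * milneSolution ρ θ a b t)) t := by
  have hsum := (hρ'.mul (hasDerivAt_cos_add_sin hθ a b)).add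
    ((hasDerivAt_cos_add_sin hθ b (-a)).div hρ hρt)
  refine (hsum.congr_deriv ?_).congr_of_eventuallyEq (.of_forall fun s => ?_)
  · unfold milneSolution
    field_simp
    ring
  · simp only [milneSolutionDeriv, Pi.add_apply, Pi.mul_apply, Pi.div_apply]
    ring

theorem milneSolution_of_eq_zero (hθt : θ t = 0) (a b : ℝ) :
    milneSolution ρ θ a b t = ρ t * a := by
  simp [milneSolution, hθt]

theorem milneSolutionDeriv_of_eq_zero (hθt : θ t = 0) (a b : ℝ) :
    milneSolutionDeriv ρ ρ' θ a b t = ρ' t * a + b / ρ t := by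
  simp [milneSolutionDeriv, hθt]

end MilneSolution

theorem stmt_6_general
    (I : Set ℝ) (hIopen : IsOpen I) (hIconn : I.OrdConnected)
    (κ : ℝ → ℝ)
    (ρ ρ' : ℝ → ℝ) (hρpos : ∀ t ∈ I, 0 < ρ t)
    (hρd : ∀ t ∈ I, HasDerivAt ρ (ρ' t) t)
    (hρdd : ∀ t ∈ I, HasDerivAt ρ' (1 / ρ t ^ 3 - κ t * ρ t) t)
    (t₀ : ℝ) (ht₀ : t₀ ∈ I)
    (ct st : ℝ → ℝ)
    (hct : ∀ t : ℝ, ct t =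
      (ρ t / ρ t₀) * Real.cos (∫ τ in t₀..t, (ρ τ ^ 2)⁻¹)
        - ρ t * ρ' t₀ * Real.sin (∫ τ in t₀..t, (ρ τ ^ 2)⁻¹))
    (hst : ∀ t : ℝ, st t = ρ t * ρ t₀ * Real.sin (∫ τ in t₀..t, (ρ τ ^ 2)⁻¹)) :
    ct t₀ = 1 ∧ st t₀ = 0 ∧
    ∃ ct' st' : ℝ → ℝ,
      (∀ t ∈ I, HasDerivAt ct (ct' t) t) ∧ ct' t₀ = 0 ∧
      (∀ t ∈ I, HasDerivAt ct' (-(κ t * ct t)) t) ∧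
      (∀ t ∈ I, HasDerivAt st (st' t) t) ∧ st' t₀ = 1 ∧
      (∀ t ∈ I, HasDerivAt st' (-(κ t * st t)) t) := by
  set θ : ℝ → ℝ := fun t => ∫ τ in t₀..t, (ρ τ ^ 2)⁻¹
  have hρne : ∀ t ∈ I, ρ t ≠ 0 := fun t ht => (hρpos t ht).ne'
  have hθ : ∀ t ∈ I, HasDerivAt θ (ρ t ^ 2)⁻¹ t := by
    have hρcont : ContinuousOn ρ I := fun t ht => (hρd t ht).continuousAt.continuousWithinAt
    exact fun t ht => hasDerivAt_intervalIntegral_of_continuousOn hIopen hIconn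
      ((hρcont.pow 2).inv₀ fun t ht => pow_ne_zero 2 (hρne t ht)) ht₀ ht
  have hθ₀ : θ t₀ = 0 := intervalIntegral.integral_same
  have hct_eq : ct = milneSolution ρ θ (ρ t₀)⁻¹ (-ρ' t₀) := by
    funext t; rw [hct, milneSolution]; ring
  have hst_eq : st = milneSolution ρ θ 0 (ρ t₀) := by
    funext t; rw [hst, milneSolution]; ring
  have hρ₀ := hρne t₀ ht₀
  subst hct_eq hst_eq
  have hvalue₀ := milneSolution_of_eq_zero (ρ := ρ) hθ₀
  have hderiv₀ := milneSolutionDeriv_of_eq_zero (ρ := ρ) (ρ' := ρ') hθ₀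
  refine ⟨?_, ?_, milneSolutionDeriv ρ ρ' θ (ρ t₀)⁻¹ (-ρ' t₀), milneSolutionDeriv ρ ρ' θ 0 (ρ t₀),
    fun t ht => hasDerivAt_milneSolution (hρd t ht) (hθ t ht) (hρne t ht) _ _, ?_,
    fun t ht => hasDerivAt_milneSolutionDeriv (hρd t ht) (hρdd t ht) (hθ t ht) (hρne t ht) _ _,
    fun t ht => hasDerivAt_milneSolution (hρd t ht) (hθ t ht) (hρne t ht) _ _, ?_,
    fun t ht => hasDerivAt_milneSolutionDeriv (hρd t ht) (hρdd t ht) (hθ t ht) (hρne t ht) _ _⟩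
  all_goals simp [hvalue₀, hderiv₀, hρ₀, div_eq_mul_inv]

/-- Let `ρ : I → (0,∞)` be a twice-differentiable solution of the
Ermakov–Pinney equation `ρ'' + κ ρ = 1/ρ³` on an open interval `I`, fix `t₀ ∈ I`,
and set `θ(t) = ∫_{t₀}^{t} ρ(τ)⁻² dτ`,
`c̃(t) = (ρ(t)/ρ(t₀))·cos θ(t) − ρ(t)·ρ'(t₀)·sin θ(t)` and
`s̃(t) = ρ(t)·ρ(t₀)·sin θ(t)`. Then `c̃` and `s̃` are twice-differentiable
solutions of the TDHO equation `u'' + κ u = 0` on `I` with `c̃(t₀) = 1`,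
`c̃'(t₀) = 0`, `s̃(t₀) = 0`, `s̃'(t₀) = 1`, i.e. they are the fundamental
solutions `c(·,t₀)` and `s(·,t₀)`. -/
theorem stmt_6
    (I : Set ℝ) (hIopen : IsOpen I) (hIconn : I.OrdConnected)
    (κ : ℝ → ℝ) (hκ : ContinuousOn κ I)
    (ρ ρ' : ℝ → ℝ) (hρpos : ∀ t ∈ I, 0 < ρ t)
    (hρd : ∀ t ∈ I, HasDerivAt ρ (ρ' t) t)
    (hρdd : ∀ t ∈ I, HasDerivAt ρ' (1 / ρ t ^ 3 - κ t * ρ t) t)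
    (t₀ : ℝ) (ht₀ : t₀ ∈ I)
    (ct st : ℝ → ℝ)
    (hct : ∀ t : ℝ, ct t =
      (ρ t / ρ t₀) * Real.cos (∫ τ in t₀..t, (ρ τ ^ 2)⁻¹)
        - ρ t * ρ' t₀ * Real.sin (∫ τ in t₀..t, (ρ τ ^ 2)⁻¹))
    (hst : ∀ t : ℝ, st t = ρ t * ρ t₀ * Real.sin (∫ τ in t₀..t, (ρ τ ^ 2)⁻¹)) :
    ct t₀ = 1 ∧ st t₀ = 0 ∧
    ∃ ct' st' : ℝ → ℝ,
      (∀ t ∈ I, HasDerivAt ct (ct' t) t) ∧ ct' t₀ = 0 ∧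
      (∀ t ∈ I, HasDerivAt ct' (-(κ t * ct t)) t) ∧
      (∀ t ∈ I, HasDerivAt st (st' t) t) ∧ st' t₀ = 1 ∧
      (∀ t ∈ I, HasDerivAt st' (-(κ t * st t)) t) :=
  stmt_6_general I hIopen hIconn κ ρ ρ' hρpos hρd hρdd t₀ ht₀ ct st hct hst
end

section
/- Let ρ : I → (0,∞) be a twice-differentiable solution of the Ermakov–Pinney equation and fix t₀ ∈ I. Then the complex-valued function u(t) := ρ(t)·exp(−i·∫_{t₀}^{t} ρ(τ)⁻² dτ) is a twice-differentiable solution of the complex TDHO equation u''(t) + κ(t)·u(t) = 0 on I, and it satisfies the constant normalization u(t)·conj(u'(t)) − u'(t)·conj(u(t)) = 2i for every t ∈ I. -/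
/-!
Write `u = ρ e^{-iθ}` with `θ' = ρ⁻²`. An amplitude `a` times `e^{-iθ}` has derivative
`(a' - i θ' a) e^{-iθ}`, so `u' = (ρ' - i/ρ) e^{-iθ}`; differentiating once more, the phase
term `-i θ' (ρ' - i/ρ) = -i ρ'/ρ² - 1/ρ³` cancels both the Ermakov–Pinney term `1/ρ³` and the
derivative `i ρ'/ρ²` of `-i/ρ`, leaving `-κ u`. Since `|e^{-iθ}| = 1` the phase drops out of
`u ū' - u' ū`, which reduces to `ρ (ρ' + i/ρ) - (ρ' - i/ρ) ρ = 2i`.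
-/

theorem ContinuousOn.hasDerivAt_integral_of_ordConnected {E : Type*} [NormedAddCommGroup E]
    [NormedSpace ℝ E] [CompleteSpace E] {I : Set ℝ} (hIopen : IsOpen I)
    (hIconn : I.OrdConnected) {f : ℝ → E} (hf : ContinuousOn f I) {a t : ℝ}
    (ha : a ∈ I) (ht : t ∈ I) :
    HasDerivAt (fun s => ∫ τ in a..s, f τ) (f t) t :=
  intervalIntegral.integral_hasDerivAt_right
    ((hf.mono (hIconn.uIcc_subset ha ht)).intervalIntegrable)
    (hf.stronglyMeasurableAtFilter hIopen t ht) (hf.continuousAt (hIopen.mem_nhds ht))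

section

open Complex ComplexConjugate

theorem HasDerivAt.mul_cexp_neg_I_mul_ofReal {a : ℝ → ℂ} {θ : ℝ → ℝ} {a' : ℂ} {ω t : ℝ}
    (ha : HasDerivAt a a' t) (hθ : HasDerivAt θ ω t) :
    HasDerivAt (fun s => a s * Complex.exp (-I * θ s))
      ((a' - I * ω * a t) * Complex.exp (-I * θ t)) t :=
  (ha.mul (hθ.ofReal_comp.const_mul (-I)).cexp).congr_deriv (by ring)

theorem mul_conj_sub_mul_conj_mul_of_norm_eq_one {a b e : ℂ} (he : ‖e‖ = 1) :
    a * e * conj (b * e) - b * e * conj (a * e) = a * conj b - b * conj a := by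
  have he' : e * conj e = 1 := by rw [RCLike.mul_conj, he]; norm_num
  simp only [map_mul]
  linear_combination (a * conj b - b * conj a) * he'

theorem norm_cexp_neg_I_mul_ofReal (x : ℝ) : ‖exp (-I * x)‖ = 1 := by
  simpa [mul_comm] using norm_exp_ofReal_mul_I (-x)

end

theorem stmt_7_general
    (I : Set ℝ) (hIopen : IsOpen I) (hIconn : I.OrdConnected)
    (κ : ℝ → ℝ)
    (ρ ρ' : ℝ → ℝ) (hρpos : ∀ t ∈ I, 0 < ρ t)
    (hρd : ∀ t ∈ I, HasDerivAt ρ (ρ' t) t)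
    (hρdd : ∀ t ∈ I, HasDerivAt ρ' (1 / ρ t ^ 3 - κ t * ρ t) t)
    (t₀ : ℝ) (ht₀ : t₀ ∈ I)
    (u : ℝ → ℂ)
    (hu : ∀ t : ℝ, u t = (ρ t : ℂ) *
      Complex.exp (-Complex.I * ((∫ τ in t₀..t, (ρ τ ^ 2)⁻¹ : ℝ) : ℂ))) :
    ∃ u' : ℝ → ℂ,
      (∀ t ∈ I, HasDerivAt u (u' t) t) ∧
      (∀ t ∈ I, HasDerivAt u' (-((κ t : ℂ) * u t)) t) ∧
      (∀ t ∈ I, u t * starRingEnd ℂ (u' t) - u' t * starRingEnd ℂ (u t)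
        = 2 * Complex.I) := by
  set θ : ℝ → ℝ := fun t => ∫ τ in t₀..t, (ρ τ ^ 2)⁻¹
  have hρ0 (t) (ht : t ∈ I) : (ρ t : ℂ) ≠ 0 := Complex.ofReal_ne_zero.mpr (hρpos t ht).ne'
  have hρinv_sq_cont : ContinuousOn (fun t => (ρ t ^ 2)⁻¹) I :=
    ((HasDerivAt.continuousOn hρd).pow 2).inv₀ fun t ht => pow_ne_zero 2 (hρpos t ht).ne'
  have hθ (t) (ht : t ∈ I) : HasDerivAt θ (ρ t ^ 2)⁻¹ t :=
    hρinv_sq_cont.hasDerivAt_integral_of_ordConnected hIopen hIconn ht₀ ht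
  obtain rfl : u = fun t => (ρ t : ℂ) * Complex.exp (-Complex.I * θ t) := funext hu
  refine ⟨fun t => (ρ' t - Complex.I * (ρ t : ℂ)⁻¹) * Complex.exp (-Complex.I * θ t),
    fun t ht => ?_, fun t ht => ?_, fun t ht => ?_⟩
  · refine (HasDerivAt.mul_cexp_neg_I_mul_ofReal (hρd t ht).ofReal_comp (hθ t ht)).congr_deriv ?_
    push_cast
    field_simp [hρ0 t ht]
  · have hρinv : HasDerivAt (fun s => (ρ s : ℂ)⁻¹) (-ρ' t / ρ t ^ 2 : ℝ) t := by
      simpa using ((hρd t ht).inv (hρpos t ht).ne').ofReal_comp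
    refine (HasDerivAt.mul_cexp_neg_I_mul_ofReal
      ((hρdd t ht).ofReal_comp.sub (hρinv.const_mul Complex.I)) (hθ t ht)).congr_deriv ?_
    simp only [Pi.sub_apply]
    push_cast
    field_simp [hρ0 t ht]
    linear_combination Complex.I_sq
  · rw [mul_conj_sub_mul_conj_mul_of_norm_eq_one (norm_cexp_neg_I_mul_ofReal _)]
    simp only [map_sub, map_mul, Complex.conj_ofReal, Complex.conj_I, map_inv₀]
    field_simp [hρ0 t ht]
    ring

/-- Let `ρ : I → (0,∞)` be a twice-differentiable solution of the
Ermakov–Pinney equation `ρ'' + κ ρ = 1/ρ³` on an open interval `I` and fix `t₀ ∈ I`.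
Then `u(t) = ρ(t)·exp(−i ∫_{t₀}^{t} ρ(τ)⁻² dτ)` is a twice-differentiable solution
of the complex TDHO equation `u'' + κ u = 0` on `I`, and it satisfies the constant
normalization `u·conj(u') − u'·conj(u) = 2i` on `I`. -/
theorem stmt_7
    (I : Set ℝ) (hIopen : IsOpen I) (hIconn : I.OrdConnected)
    (κ : ℝ → ℝ) (hκ : ContinuousOn κ I)
    (ρ ρ' : ℝ → ℝ) (hρpos : ∀ t ∈ I, 0 < ρ t)
    (hρd : ∀ t ∈ I, HasDerivAt ρ (ρ' t) t)
    (hρdd : ∀ t ∈ I, HasDerivAt ρ' (1 / ρ t ^ 3 - κ t * ρ t) t)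
    (t₀ : ℝ) (ht₀ : t₀ ∈ I)
    (u : ℝ → ℂ)
    (hu : ∀ t : ℝ, u t = (ρ t : ℂ) *
      Complex.exp (-Complex.I * ((∫ τ in t₀..t, (ρ τ ^ 2)⁻¹ : ℝ) : ℂ))) :
    ∃ u' : ℝ → ℂ,
      (∀ t ∈ I, HasDerivAt u (u' t) t) ∧
      (∀ t ∈ I, HasDerivAt u' (-((κ t : ℂ) * u t)) t) ∧
      (∀ t ∈ I, u t * starRingEnd ℂ (u' t) - u' t * starRingEnd ℂ (u t)
        = 2 * Complex.I) :=
  stmt_7_general I hIopen hIconn κ ρ ρ' hρpos hρd hρdd t₀ ht₀ u hu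
end

section
/- Fix ω > 0 and define the Bogoliubov coefficients A_ω(t,t₀) := ½·(c(t,t₀) + ∂ₜs(t,t₀)) + (i/2)·(ω⁻¹·∂ₜc(t,t₀) − ω·s(t,t₀)) and B_ω(t,t₀) := ½·(c(t,t₀) − ∂ₜs(t,t₀)) + (i/2)·(ω⁻¹·∂ₜc(t,t₀) + ω·s(t,t₀)). Then for all t, t₀ ∈ I: (1) |A_ω(t,t₀)|² − |B_ω(t,t₀)|² = 1, so in particular A_ω(t,t₀) never vanishes; (2) A_ω(t,t₀) = conj(A_ω(t₀,t)); (3) B_ω(t,t₀) = −B_ω(t₀,t). -/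
/-!
Constancy of the Wronskian `f g' - f' g` of two solutions does all the work. Applied to
`c(·,t₀), s(·,t₀)` it gives `c s' - c' s = 1`; applied to one solution based at `t` and one based
at `t₀`, and evaluated at `t` and at `t₀`, it gives the reflection rules
`c(t₀,t) = ∂ₜs(t,t₀)`, `∂ₜc(t₀,t) = -∂ₜc(t,t₀)`, `s(t₀,t) = -s(t,t₀)`, `∂ₜs(t₀,t) = c(t,t₀)`.
The three claims are then identities between complex numbers.
-/

open ComplexConjugate

def IsTDHOSolutionOn (s : Set ℝ) (κ f f' : ℝ → ℝ) : Prop :=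
  (∀ x ∈ s, HasDerivAt f (f' x) x) ∧ ∀ x ∈ s, HasDerivAt f' (-(κ x * f x)) x

theorem IsTDHOSolutionOn.wronskian_eq {s : Set ℝ} {κ f f' g g' : ℝ → ℝ}
    (hf : IsTDHOSolutionOn s κ f f') (hg : IsTDHOSolutionOn s κ g g')
    (hs : IsOpen s) (hs' : IsPreconnected s) {x y : ℝ} (hx : x ∈ s) (hy : y ∈ s) :
    f x * g' x - f' x * g x = f y * g' y - f' y * g y := by
  have hW : ∀ z ∈ s, HasDerivAt (fun z => f z * g' z - f' z * g z) 0 z := fun z hz =>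
    (((hf.1 z hz).mul (hg.2 z hz)).sub ((hf.2 z hz).mul (hg.1 z hz))).congr_deriv (by ring)
  exact hs.is_const_of_deriv_eq_zero hs'
    (fun z hz => (hW z hz).differentiableAt.differentiableWithinAt) (fun z hz => (hW z hz).deriv)
    hx hy

section Bogoliubov

variable (ω c s c' s' : ℝ)

noncomputable def bogoliubovA : ℂ :=
  (1 / 2 : ℂ) * ((c : ℂ) + (s' : ℂ)) + Complex.I / 2 * ((ω⁻¹ * c' - ω * s : ℝ) : ℂ)

noncomputable def bogoliubovB : ℂ :=
  (1 / 2 : ℂ) * ((c : ℂ) - (s' : ℂ)) + Complex.I / 2 * ((ω⁻¹ * c' + ω * s : ℝ) : ℂ)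

@[simp]
theorem bogoliubovA_re : (bogoliubovA ω c s c' s').re = (c + s') / 2 := by
  simp [bogoliubovA, inv_mul_eq_div]

@[simp]
theorem bogoliubovA_im : (bogoliubovA ω c s c' s').im = (ω⁻¹ * c' - ω * s) / 2 := by
  simp [bogoliubovA, inv_mul_eq_div]

@[simp]
theorem bogoliubovB_re : (bogoliubovB ω c s c' s').re = (c - s') / 2 := by
  simp [bogoliubovB, inv_mul_eq_div]

@[simp]
theorem bogoliubovB_im : (bogoliubovB ω c s c' s').im = (ω⁻¹ * c' + ω * s) / 2 := by
  simp [bogoliubovB, inv_mul_eq_div]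

theorem norm_bogoliubovA_sq_sub_norm_bogoliubovB_sq {ω : ℝ} (hω : ω ≠ 0) :
    ‖bogoliubovA ω c s c' s'‖ ^ 2 - ‖bogoliubovB ω c s c' s'‖ ^ 2 = c * s' - c' * s := by
  rw [← Complex.normSq_eq_norm_sq, ← Complex.normSq_eq_norm_sq, Complex.normSq_apply,
    Complex.normSq_apply, bogoliubovA_re, bogoliubovA_im, bogoliubovB_re, bogoliubovB_im]
  field_simp
  ring

theorem bogoliubovA_reflect :
    bogoliubovA ω c s c' s' = conj (bogoliubovA ω s' (-s) (-c') c) := by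
  apply Complex.ext <;> simp only [bogoliubovA_re, bogoliubovA_im, Complex.conj_re,
    Complex.conj_im] <;> ring

theorem bogoliubovB_reflect :
    bogoliubovB ω c s c' s' = -bogoliubovB ω s' (-s) (-c') c := by
  apply Complex.ext <;> simp only [bogoliubovB_re, bogoliubovB_im, Complex.neg_re,
    Complex.neg_im] <;> ring

end Bogoliubov

theorem stmt_8_general
    (I : Set ℝ) (hIopen : IsOpen I) (hIconn : I.OrdConnected)
    (κ : ℝ → ℝ)
    (c s c' s' : ℝ → ℝ → ℝ)
    (hcderiv : ∀ t₀ ∈ I, ∀ t ∈ I, HasDerivAt (fun u => c u t₀) (c' t t₀) t)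
    (hcderiv2 : ∀ t₀ ∈ I, ∀ t ∈ I, HasDerivAt (fun u => c' u t₀) (-(κ t * c t t₀)) t)
    (hsderiv : ∀ t₀ ∈ I, ∀ t ∈ I, HasDerivAt (fun u => s u t₀) (s' t t₀) t)
    (hsderiv2 : ∀ t₀ ∈ I, ∀ t ∈ I, HasDerivAt (fun u => s' u t₀) (-(κ t * s t t₀)) t)
    (hcinit : ∀ t₀ ∈ I, c t₀ t₀ = 1) (hcinit' : ∀ t₀ ∈ I, c' t₀ t₀ = 0)
    (hsinit : ∀ t₀ ∈ I, s t₀ t₀ = 0) (hsinit' : ∀ t₀ ∈ I, s' t₀ t₀ = 1)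
    (ω : ℝ) (hω : 0 < ω) (A B : ℝ → ℝ → ℂ)
    (hA : ∀ t t₀ : ℝ, A t t₀ =
      (1 / 2 : ℂ) * ((c t t₀ : ℂ) + (s' t t₀ : ℂ)) +
        Complex.I / 2 * ((ω⁻¹ * c' t t₀ - ω * s t t₀ : ℝ) : ℂ))
    (hB : ∀ t t₀ : ℝ, B t t₀ =
      (1 / 2 : ℂ) * ((c t t₀ : ℂ) - (s' t t₀ : ℂ)) +
        Complex.I / 2 * ((ω⁻¹ * c' t t₀ + ω * s t t₀ : ℝ) : ℂ)) :
    ∀ t ∈ I, ∀ t₀ ∈ I,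
      ‖A t t₀‖ ^ 2 - ‖B t t₀‖ ^ 2 = 1 ∧
      A t t₀ ≠ 0 ∧
      A t t₀ = starRingEnd ℂ (A t₀ t) ∧
      B t t₀ = -B t₀ t := by
  intro t ht t₀ ht₀
  have hc : ∀ a ∈ I, IsTDHOSolutionOn I κ (c · a) (c' · a) := fun a ha =>
    ⟨hcderiv a ha, hcderiv2 a ha⟩
  have hs : ∀ a ∈ I, IsTDHOSolutionOn I κ (s · a) (s' · a) := fun a ha =>
    ⟨hsderiv a ha, hsderiv2 a ha⟩
  have hW {f f' g g' : ℝ → ℝ} (hf : IsTDHOSolutionOn I κ f f') (hg : IsTDHOSolutionOn I κ g g') :=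
    hf.wronskian_eq hg hIopen hIconn.isPreconnected ht ht₀
  have hcs := hW (hc t₀ ht₀) (hs t₀ ht₀)
  have hcc := hW (hc t ht) (hc t₀ ht₀)
  have hcs' := hW (hc t ht) (hs t₀ ht₀)
  have hsc := hW (hs t ht) (hc t₀ ht₀)
  have hss := hW (hs t ht) (hs t₀ ht₀)
  simp only [hcinit, hcinit', hsinit, hsinit', ht, ht₀, one_mul, mul_one, zero_mul, mul_zero,
    sub_zero, zero_sub] at hcs hcc hcs' hsc hss
  have hc_reflect : c t₀ t = s' t t₀ := hcs'.symm
  have hc'_reflect : c' t₀ t = -c' t t₀ := by linarith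
  have hs_reflect : s t₀ t = -s t t₀ := hss.symm
  have hs'_reflect : s' t₀ t = c t t₀ := by linarith
  have hnorm : ‖A t t₀‖ ^ 2 - ‖B t t₀‖ ^ 2 = 1 := by
    rw [hA, hB]
    exact (norm_bogoliubovA_sq_sub_norm_bogoliubovB_sq _ _ _ _ hω.ne').trans hcs
  refine ⟨hnorm, fun h0 => ?_, ?_, ?_⟩
  · rw [h0, norm_zero] at hnorm
    nlinarith [sq_nonneg ‖B t t₀‖]
  · rw [hA, hA, hc_reflect, hc'_reflect, hs_reflect, hs'_reflect]
    exact bogoliubovA_reflect _ _ _ _ _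
  · rw [hB, hB, hc_reflect, hc'_reflect, hs_reflect, hs'_reflect]
    exact bogoliubovB_reflect _ _ _ _ _

/-- Fix `ω > 0` and define the Bogoliubov coefficients
`A_ω(t,t₀) = ½(c(t,t₀) + ∂ₜs(t,t₀)) + (i/2)(ω⁻¹ ∂ₜc(t,t₀) − ω s(t,t₀))` and
`B_ω(t,t₀) = ½(c(t,t₀) − ∂ₜs(t,t₀)) + (i/2)(ω⁻¹ ∂ₜc(t,t₀) + ω s(t,t₀))`, where
`c, s` are the fundamental solutions of the TDHO equation on an open interval `I`.
Then for all `t, t₀ ∈ I`: `|A|² − |B|² = 1` (so `A` never vanishes),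
`A(t,t₀) = conj(A(t₀,t))` and `B(t,t₀) = −B(t₀,t)`. -/
theorem stmt_8
    (I : Set ℝ) (hIopen : IsOpen I) (hIconn : I.OrdConnected)
    (κ : ℝ → ℝ) (hκ : ContinuousOn κ I)
    (c s c' s' : ℝ → ℝ → ℝ)
    (hcderiv : ∀ t₀ ∈ I, ∀ t ∈ I, HasDerivAt (fun u => c u t₀) (c' t t₀) t)
    (hcderiv2 : ∀ t₀ ∈ I, ∀ t ∈ I, HasDerivAt (fun u => c' u t₀) (-(κ t * c t t₀)) t)
    (hsderiv : ∀ t₀ ∈ I, ∀ t ∈ I, HasDerivAt (fun u => s u t₀) (s' t t₀) t)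
    (hsderiv2 : ∀ t₀ ∈ I, ∀ t ∈ I, HasDerivAt (fun u => s' u t₀) (-(κ t * s t t₀)) t)
    (hcinit : ∀ t₀ ∈ I, c t₀ t₀ = 1) (hcinit' : ∀ t₀ ∈ I, c' t₀ t₀ = 0)
    (hsinit : ∀ t₀ ∈ I, s t₀ t₀ = 0) (hsinit' : ∀ t₀ ∈ I, s' t₀ t₀ = 1)
    (ω : ℝ) (hω : 0 < ω) (A B : ℝ → ℝ → ℂ)
    (hA : ∀ t t₀ : ℝ, A t t₀ =
      (1 / 2 : ℂ) * ((c t t₀ : ℂ) + (s' t t₀ : ℂ)) +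
        Complex.I / 2 * ((ω⁻¹ * c' t t₀ - ω * s t t₀ : ℝ) : ℂ))
    (hB : ∀ t t₀ : ℝ, B t t₀ =
      (1 / 2 : ℂ) * ((c t t₀ : ℂ) - (s' t t₀ : ℂ)) +
        Complex.I / 2 * ((ω⁻¹ * c' t t₀ + ω * s t t₀ : ℝ) : ℂ)) :
    ∀ t ∈ I, ∀ t₀ ∈ I,
      ‖A t t₀‖ ^ 2 - ‖B t t₀‖ ^ 2 = 1 ∧
      A t t₀ ≠ 0 ∧
      A t t₀ = starRingEnd ℂ (A t₀ t) ∧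
      B t t₀ = -B t₀ t :=
  stmt_8_general I hIopen hIconn κ c s c' s' hcderiv hcderiv2 hsderiv hsderiv2 hcinit hcinit' hsinit
    hsinit' ω hω A B hA hB
end

section
/- Conservation of the Lewis invariant: let ρ : I → (0,∞) be a twice-differentiable solution of the Ermakov–Pinney equation and let q : I → ℝ be any twice-differentiable solution of the TDHO equation q''(t) + κ(t)·q(t) = 0. Then the function t ↦ ½·( q(t)²/ρ(t)² + (ρ(t)·q'(t) − ρ'(t)·q(t))² ) is constant on I. -/
/-!
Differentiating `I(t) = ½ (q²/ρ² + (ρ q' − ρ' q)²)` gives `q (ρ q' − ρ' q) / ρ³` from the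
first term and `(ρ q' − ρ' q)(ρ q'' − ρ'' q)` from the second. The two equations give
`ρ q'' − ρ'' q = −q/ρ³` (the `κ`-terms cancel), so the derivative vanishes and `I` is
constant on the interval by the mean value theorem.
-/

theorem Set.OrdConnected.eq_of_hasDerivAt_eq_zero_s9 {E : Type*} [NormedAddCommGroup E]
    [NormedSpace ℝ E] {s : Set ℝ} (hs : s.OrdConnected) {f : ℝ → E}
    (hf : ∀ t ∈ s, HasDerivAt f 0 t) {x y : ℝ} (hx : x ∈ s) (hy : y ∈ s) : f x = f y := by
  have h := hs.convex.norm_image_sub_le_of_norm_hasDerivWithin_le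
    (fun t ht => (hf t ht).hasDerivWithinAt) (fun _ _ => norm_zero.le) hx hy
  rw [zero_mul, norm_le_zero_iff, sub_eq_zero] at h
  exact h.symm

noncomputable def lewisInvariant (ρ ρ' q q' : ℝ → ℝ) (t : ℝ) : ℝ :=
  1 / 2 * (q t ^ 2 / ρ t ^ 2 + (ρ t * q' t - ρ' t * q t) ^ 2)

theorem hasDerivAt_lewisInvariant {ρ ρ' q q' : ℝ → ℝ} {t k : ℝ} (hρ : ρ t ≠ 0)
    (hρd : HasDerivAt ρ (ρ' t) t) (hρdd : HasDerivAt ρ' (1 / ρ t ^ 3 - k * ρ t) t)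
    (hqd : HasDerivAt q (q' t) t) (hqdd : HasDerivAt q' (-(k * q t)) t) :
    HasDerivAt (lewisInvariant ρ ρ' q q') 0 t := by
  have hratio := (hqd.fun_pow 2).fun_div (hρd.fun_pow 2) (pow_ne_zero 2 hρ)
  have hwronskian := ((hρd.fun_mul hqdd).fun_sub (hρdd.fun_mul hqd)).fun_pow 2
  refine ((hratio.fun_add hwronskian).const_mul (1 / 2 : ℝ)).congr_deriv ?_
  field_simp
  ring

theorem stmt_9_general
    (I : Set ℝ) (hIconn : I.OrdConnected)
    (κ : ℝ → ℝ)
    (ρ ρ' q q' : ℝ → ℝ) (hρpos : ∀ t ∈ I, 0 < ρ t)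
    (hρd : ∀ t ∈ I, HasDerivAt ρ (ρ' t) t)
    (hρdd : ∀ t ∈ I, HasDerivAt ρ' (1 / ρ t ^ 3 - κ t * ρ t) t)
    (hqd : ∀ t ∈ I, HasDerivAt q (q' t) t)
    (hqdd : ∀ t ∈ I, HasDerivAt q' (-(κ t * q t)) t) :
    ∀ t₁ ∈ I, ∀ t₂ ∈ I,
      1 / 2 * (q t₁ ^ 2 / ρ t₁ ^ 2 + (ρ t₁ * q' t₁ - ρ' t₁ * q t₁) ^ 2) =
      1 / 2 * (q t₂ ^ 2 / ρ t₂ ^ 2 + (ρ t₂ * q' t₂ - ρ' t₂ * q t₂) ^ 2) := by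
  have hderiv : ∀ t ∈ I, HasDerivAt (lewisInvariant ρ ρ' q q') 0 t := fun t ht =>
    hasDerivAt_lewisInvariant (hρpos t ht).ne' (hρd t ht) (hρdd t ht) (hqd t ht) (hqdd t ht)
  exact fun t₁ h₁ t₂ h₂ => hIconn.eq_of_hasDerivAt_eq_zero_s9 hderiv h₁ h₂

/-- (Conservation of the Lewis invariant.) Let `ρ : I → (0,∞)` be
a twice-differentiable solution of the Ermakov–Pinney equation `ρ'' + κ ρ = 1/ρ³`
on an open interval `I` and let `q` be any twice-differentiable solution of the
TDHO equation `q'' + κ q = 0` on `I`. Then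
`t ↦ ½(q(t)²/ρ(t)² + (ρ(t) q'(t) − ρ'(t) q(t))²)` is constant on `I`. -/
theorem stmt_9
    (I : Set ℝ) (hIopen : IsOpen I) (hIconn : I.OrdConnected)
    (κ : ℝ → ℝ) (hκ : ContinuousOn κ I)
    (ρ ρ' q q' : ℝ → ℝ) (hρpos : ∀ t ∈ I, 0 < ρ t)
    (hρd : ∀ t ∈ I, HasDerivAt ρ (ρ' t) t)
    (hρdd : ∀ t ∈ I, HasDerivAt ρ' (1 / ρ t ^ 3 - κ t * ρ t) t)
    (hqd : ∀ t ∈ I, HasDerivAt q (q' t) t)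
    (hqdd : ∀ t ∈ I, HasDerivAt q' (-(κ t * q t)) t) :
    ∀ t₁ ∈ I, ∀ t₂ ∈ I,
      1 / 2 * (q t₁ ^ 2 / ρ t₁ ^ 2 + (ρ t₁ * q' t₁ - ρ' t₁ * q t₁) ^ 2) =
      1 / 2 * (q t₂ ^ 2 / ρ t₂ ^ 2 + (ρ t₂ * q' t₂ - ρ' t₂ * q t₂) ^ 2) :=
  stmt_9_general I hIconn κ ρ ρ' q q' hρpos hρd hρdd hqd hqdd
end

section
/- The Feynman propagator of the TDHO satisfies the time-dependent Schrödinger equation away from caustics: fix t₀ ∈ I and q₀ ∈ ℝ, let J ⊆ I be an open interval on which s(t,t₀) > 0, and define K : ℝ × J → ℂ by K(q,t) := (2π)^{−1/2}·e^{−iπ/4}·s(t,t₀)^{−1/2}·exp( (i/(2·s(t,t₀)))·( c(t₀,t)·q² + c(t,t₀)·q₀² − 2·q·q₀ ) ), where s(t,t₀)^{−1/2} is the positive real root. Then K is smooth in q and differentiable in t, and for all (q,t) ∈ ℝ × J it satisfies i·∂ₜK(q,t) = −½·∂²_q K(q,t) + ½·κ(t)·q²·K(q,t). -/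
/-!
Abel's identity makes the Wronskian `c s' - c' s` of the fundamental solutions constant, hence
equal to `1`, and uniqueness for the TDHO equation (comparing data at `t`) gives
`c(t₀, t) = ∂ₜs(t, t₀)`. After this substitution `K` depends on `t` only through
`s(t, t₀)`, `∂ₜs(t, t₀)` and `c(t, t₀)`, and it is a Gaussian in `q`. Differentiating, the
Schrödinger equation reduces to an algebraic identity which holds precisely because
`∂ₜ²s = -κ s` and the Wronskian is `1`.
-/

open Set Filter Topology

theorem Set.OrdConnected.exists_Icc_subset_of_isOpen {I : Set ℝ} (hIopen : IsOpen I)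
    (hIconn : I.OrdConnected) {x y : ℝ} (hx : x ∈ I) (hy : y ∈ I) :
    ∃ a b, x ∈ Ioo a b ∧ y ∈ Ioo a b ∧ Icc a b ⊆ I := by
  have hmin : min x y ∈ I := min_rec' (· ∈ I) hx hy
  have hmax : max x y ∈ I := max_rec' (· ∈ I) hx hy
  obtain ⟨a, haI, ha⟩ : ∃ a, a ∈ I ∧ a < min x y :=
    ((Filter.Eventually.filter_mono nhdsWithin_le_nhds (hIopen.mem_nhds hmin)).and
      (self_mem_nhdsWithin : ∀ᶠ a in 𝓝[<] min x y, a < min x y)).exists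
  obtain ⟨b, hbI, hb⟩ : ∃ b, b ∈ I ∧ max x y < b :=
    ((Filter.Eventually.filter_mono nhdsWithin_le_nhds (hIopen.mem_nhds hmax)).and
      (self_mem_nhdsWithin : ∀ᶠ b in 𝓝[>] max x y, max x y < b)).exists
  rw [lt_min_iff] at ha
  rw [max_lt_iff] at hb
  exact ⟨a, b, ⟨ha.1, hb.1⟩, ⟨ha.2, hb.2⟩, hIconn.out haI hbI⟩

def IsTDHOSolution (I : Set ℝ) (κ : ℝ → ℝ) (f f' : ℝ → ℝ) : Prop :=
  ∀ t ∈ I, HasDerivAt f (f' t) t ∧ HasDerivAt f' (-(κ t * f t)) t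

namespace IsTDHOSolution

variable {I : Set ℝ} {κ f f' g g' : ℝ → ℝ}

theorem linear_comb (hf : IsTDHOSolution I κ f f') (hg : IsTDHOSolution I κ g g') (a b : ℝ) :
    IsTDHOSolution I κ (fun t => a * f t + b * g t) (fun t => a * f' t + b * g' t) := by
  intro t ht
  refine ⟨((hf t ht).1.const_mul a).add ((hg t ht).1.const_mul b), ?_⟩
  exact (((hf t ht).2.const_mul a).add ((hg t ht).2.const_mul b)).congr_deriv (by ring)

theorem wronskian_eq (hf : IsTDHOSolution I κ f f') (hg : IsTDHOSolution I κ g g')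
    (hIopen : IsOpen I) (hIconn : I.OrdConnected) {x y : ℝ} (hx : x ∈ I) (hy : y ∈ I) :
    f x * g' x - f' x * g x = f y * g' y - f' y * g y := by
  have hW : ∀ t ∈ I, HasDerivAt (fun t => f t * g' t - f' t * g t) 0 t := fun t ht =>
    (((hf t ht).1.mul (hg t ht).2).sub ((hf t ht).2.mul (hg t ht).1)).congr_deriv (by ring)
  exact hIopen.is_const_of_deriv_eq_zero hIconn.isPreconnected
    (fun t ht => (hW t ht).differentiableAt.differentiableWithinAt)
    (fun t ht => (hW t ht).deriv) hx hy

theorem eqOn (hf : IsTDHOSolution I κ f f') (hg : IsTDHOSolution I κ g g')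
    (hIopen : IsOpen I) (hIconn : I.OrdConnected) (hκ : ContinuousOn κ I) {τ : ℝ} (hτ : τ ∈ I)
    (h₀ : f τ = g τ) (h₀' : f' τ = g' τ) : EqOn f g I := by
  intro x hx
  obtain ⟨a, b, hτab, hxab, hab⟩ := hIconn.exists_Icc_subset_of_isOpen hIopen hτ hx
  obtain ⟨M, hM⟩ := isCompact_Icc.exists_bound_of_continuousOn (hκ.mono hab)
  let v : ℝ → ℝ × ℝ → ℝ × ℝ := fun t p => (p.2, -(κ t * p.1))
  have hv : ∀ t ∈ Ioo a b, LipschitzOnWith (max 1 M.toNNReal) (v t) univ := by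
    intro t ht
    refine (LipschitzWith.prod_snd.prodMk
      (LipschitzWith.of_dist_le_mul fun p r => ?_)).lipschitzOnWith
    have hκt : |κ t| ≤ M := hM t (Ioo_subset_Icc_self ht)
    calc dist (-(κ t * p.1)) (-(κ t * r.1)) = |κ t| * dist p.1 r.1 := by
          rw [dist_neg_neg, Real.dist_eq, Real.dist_eq, ← mul_sub, abs_mul]
      _ ≤ M.toNNReal * dist p r := by
          gcongr
          · exact hκt.trans (Real.le_coe_toNNReal M)
          · rw [Prod.dist_eq]; exact le_max_left _ _
  have hsol : ∀ {u u' : ℝ → ℝ}, IsTDHOSolution I κ u u' →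
      ∀ t ∈ Ioo a b, HasDerivAt (fun t => (u t, u' t)) (v t (u t, u' t)) t ∧ (u t, u' t) ∈ univ :=
    fun hu t ht => ⟨(hu t (hab (Ioo_subset_Icc_self ht))).1.prodMk
      (hu t (hab (Ioo_subset_Icc_self ht))).2, trivial⟩
  have := ODE_solution_unique_of_mem_Ioo hv hτab (hsol hf) (hsol hg) (by rw [h₀, h₀']) hxab
  exact congrArg Prod.fst this

theorem wronskian_eq_one {c c' s s' : ℝ → ℝ} (hc : IsTDHOSolution I κ c c')
    (hs : IsTDHOSolution I κ s s') (hIopen : IsOpen I) (hIconn : I.OrdConnected) {τ : ℝ}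
    (hτ : τ ∈ I) (hcτ : c τ = 1) (hc'τ : c' τ = 0) (hsτ : s τ = 0) (hs'τ : s' τ = 1) {t : ℝ}
    (ht : t ∈ I) : c t * s' t - c' t * s t = 1 := by
  rw [hc.wronskian_eq hs hIopen hIconn ht hτ, hcτ, hc'τ, hsτ, hs'τ]
  ring

/-- With `c, s` the fundamental solutions at `τ` and `f` the solution with data `(1, 0)` at `u`,
this is the identity `c(τ, u) = ∂ₜs(u, τ)`. -/
theorem apply_eq_deriv_sine {c c' s s' : ℝ → ℝ} (hf : IsTDHOSolution I κ f f')
    (hc : IsTDHOSolution I κ c c') (hs : IsTDHOSolution I κ s s') (hIopen : IsOpen I)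
    (hIconn : I.OrdConnected) (hκ : ContinuousOn κ I) {τ u : ℝ} (hτ : τ ∈ I) (hu : u ∈ I)
    (hcτ : c τ = 1) (hc'τ : c' τ = 0) (hsτ : s τ = 0) (hs'τ : s' τ = 1)
    (hfu : f u = 1) (hf'u : f' u = 0) : f τ = s' u := by
  have hW := hc.wronskian_eq_one hs hIopen hIconn hτ hcτ hc'τ hsτ hs'τ hu
  have hfg := hf.eqOn (hc.linear_comb hs (s' u) (-c' u)) hIopen hIconn hκ hu
    (by rw [hfu, ← hW]; ring) (by rw [hf'u]; ring) hτ
  simp only [hfg, hcτ, hsτ]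
  ring

end IsTDHOSolution

section Kernel

open Complex

theorem hasDerivAt_mul_cexp_quadratic (B a b d : ℂ) (x : ℝ) :
    HasDerivAt (fun q : ℝ => B * exp (a * (q : ℂ) ^ 2 + b * q + d))
      ((2 * a * x + b) * (B * exp (a * (x : ℂ) ^ 2 + b * x + d))) x := by
  have hq : HasDerivAt (fun q : ℝ => (q : ℂ)) 1 x := (hasDerivAt_id x).ofReal_comp
  have := (((((hq.pow 2).const_mul a).add (hq.const_mul b)).add_const d).cexp).const_mul B
  simp only [Pi.add_apply, Pi.pow_apply] at this
  exact this.congr_deriv (by push_cast; ring)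

theorem iteratedDeriv_two_mul_cexp_quadratic (B a b d : ℂ) (x : ℝ) :
    iteratedDeriv 2 (fun q : ℝ => B * exp (a * (q : ℂ) ^ 2 + b * q + d)) x =
      ((2 * a * x + b) ^ 2 + 2 * a) * (B * exp (a * (x : ℂ) ^ 2 + b * x + d)) := by
  have hq : HasDerivAt (fun q : ℝ => (q : ℂ)) 1 x := (hasDerivAt_id x).ofReal_comp
  rw [iteratedDeriv_succ, iteratedDeriv_one,
    funext fun y => (hasDerivAt_mul_cexp_quadratic B a b d y).deriv]
  exact ((((hq.const_mul (2 * a)).add_const b).mul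
    (hasDerivAt_mul_cexp_quadratic B a b d x)).deriv).trans (by ring)

/-- With `σ = s(·, t₀)`, `σ' = ∂ₜs(·, t₀)`, `γ = c(·, t₀)` and `A = (2π)^{-1/2} e^{-iπ/4}` this is
the propagator `K`, after `c(t₀, t)` has been replaced by `∂ₜs(t, t₀)`. -/
noncomputable def tdhoKernel (A : ℂ) (σ σ' γ : ℝ → ℝ) (q₀ q t : ℝ) : ℂ :=
  A * ((Real.sqrt (σ t))⁻¹ : ℂ) *
    exp (I / (2 * (σ t : ℂ)) * ((σ' t : ℂ) * (q : ℂ) ^ 2 + (γ t : ℂ) * (q₀ : ℂ) ^ 2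
      - 2 * (q : ℂ) * (q₀ : ℂ)))

section

variable (A : ℂ) (σ σ' γ : ℝ → ℝ) (q₀ : ℝ)

theorem tdhoKernel_eq_mul_cexp_quadratic (t : ℝ) :
    (fun q => tdhoKernel A σ σ' γ q₀ q t) = fun q : ℝ =>
      A * ((Real.sqrt (σ t))⁻¹ : ℂ) * exp (I / (2 * (σ t : ℂ)) * σ' t * (q : ℂ) ^ 2 +
        (-(2 * (I / (2 * (σ t : ℂ))) * q₀)) * q + I / (2 * (σ t : ℂ)) * γ t * (q₀ : ℂ) ^ 2) := by
  ext q
  simp only [tdhoKernel]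
  ring_nf

theorem contDiff_tdhoKernel_space {n : WithTop ℕ∞} (t : ℝ) :
    ContDiff ℝ n (fun q => tdhoKernel A σ σ' γ q₀ q t) := by
  rw [tdhoKernel_eq_mul_cexp_quadratic]
  have : ContDiff ℝ n (fun q : ℝ => (q : ℂ)) := ofRealCLM.contDiff
  fun_prop

theorem iteratedDeriv_two_tdhoKernel_space (q t : ℝ) :
    iteratedDeriv 2 (fun q' => tdhoKernel A σ σ' γ q₀ q' t) q =
      ((I / (2 * (σ t : ℂ)) * (2 * σ' t * q - 2 * q₀)) ^ 2 + I / σ t * σ' t) *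
        tdhoKernel A σ σ' γ q₀ q t := by
  rw [tdhoKernel_eq_mul_cexp_quadratic, iteratedDeriv_two_mul_cexp_quadratic, tdhoKernel]
  ring_nf

end

theorem hasDerivAt_tdhoKernel_time (A : ℂ) {σ σ' γ : ℝ → ℝ} {σ'' γ' : ℝ} (q₀ q : ℝ) {t : ℝ}
    (hσ : HasDerivAt σ (σ' t) t) (hσ' : HasDerivAt σ' σ'' t) (hγ : HasDerivAt γ γ' t)
    (hpos : 0 < σ t) :
    HasDerivAt (fun t' => tdhoKernel A σ σ' γ q₀ q t')
      ((-(σ' t : ℂ) / (2 * σ t) + I / (2 * (σ t : ℂ)) * (σ'' * (q : ℂ) ^ 2 + γ' * (q₀ : ℂ) ^ 2 -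
        σ' t / σ t * (σ' t * (q : ℂ) ^ 2 + γ t * (q₀ : ℂ) ^ 2 - 2 * q * q₀))) *
        tdhoKernel A σ σ' γ q₀ q t) t := by
  have hsqrt_pos : 0 < Real.sqrt (σ t) := Real.sqrt_pos.mpr hpos
  have hσC : (σ t : ℂ) ≠ 0 := by exact_mod_cast hpos.ne'
  have hinv : HasDerivAt (fun t => ((Real.sqrt (σ t))⁻¹ : ℂ))
      ((-(σ' t / (2 * Real.sqrt (σ t))) / Real.sqrt (σ t) ^ 2 : ℝ) : ℂ) t := by
    simpa only [Pi.inv_apply, ofReal_inv] using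
      ((hσ.sqrt hpos.ne').inv hsqrt_pos.ne').ofReal_comp
  have hw := (hasDerivAt_const t I).div (hσ.ofReal_comp.const_mul 2) (mul_ne_zero two_ne_zero hσC)
  have hP : HasDerivAt (fun t => (σ' t : ℂ) * (q : ℂ) ^ 2 + (γ t : ℂ) * (q₀ : ℂ) ^ 2
      - 2 * (q : ℂ) * (q₀ : ℂ)) (σ'' * (q : ℂ) ^ 2 + γ' * (q₀ : ℂ) ^ 2) t :=
    ((hσ'.ofReal_comp.mul_const _).add (hγ.ofReal_comp.mul_const _)).sub_const _
  have := (hinv.const_mul A).mul (hw.mul hP).cexp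
  simp only [Pi.mul_apply, Pi.div_apply] at this
  refine this.congr_deriv ?_
  have hsqC : (Real.sqrt (σ t) : ℂ) ≠ 0 := by exact_mod_cast hsqrt_pos.ne'
  have hsq : (Real.sqrt (σ t) : ℂ) ^ 2 = σ t := by exact_mod_cast Real.sq_sqrt hpos.le
  simp only [tdhoKernel]
  push_cast
  rw [hsq]
  field_simp
  ring

theorem tdhoKernel_schrodinger (A : ℂ) (κ : ℝ → ℝ) {σ σ' γ γ' : ℝ → ℝ} (q₀ q : ℝ) {t : ℝ}
    (hσ : HasDerivAt σ (σ' t) t) (hσ' : HasDerivAt σ' (-(κ t * σ t)) t)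
    (hγ : HasDerivAt γ (γ' t) t) (hW : γ t * σ' t - γ' t * σ t = 1) (hpos : 0 < σ t) :
    I * deriv (fun t' => tdhoKernel A σ σ' γ q₀ q t') t =
      -(1 / 2 : ℂ) * iteratedDeriv 2 (fun q' => tdhoKernel A σ σ' γ q₀ q' t) q +
        (1 / 2 : ℂ) * (κ t : ℂ) * (q : ℂ) ^ 2 * tdhoKernel A σ σ' γ q₀ q t := by
  rw [(hasDerivAt_tdhoKernel_time A q₀ q hσ hσ' hγ hpos).deriv,
    iteratedDeriv_two_tdhoKernel_space]
  have hσC : (σ t : ℂ) ≠ 0 := by exact_mod_cast hpos.ne'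
  have hWC : (γ t : ℂ) * σ' t - γ' t * σ t = 1 := by exact_mod_cast hW
  push_cast
  field_simp
  -- the `q₀²`-terms cancel by the Wronskian identity, the rest by `I² = -1`
  linear_combination (q₀ : ℂ) ^ 2 * tdhoKernel A σ σ' γ q₀ q t * hWC +
    ((q₀ : ℂ) ^ 2 * (1 - (γ t * σ' t - γ' t * σ t)) - (σ t : ℂ) ^ 2 * κ t * (q : ℂ) ^ 2) *
      tdhoKernel A σ σ' γ q₀ q t * I_sq

end Kernel

theorem stmt_10_general
    (I : Set ℝ) (hIopen : IsOpen I) (hIconn : I.OrdConnected)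
    (κ : ℝ → ℝ) (hκ : ContinuousOn κ I)
    (c s c' s' : ℝ → ℝ → ℝ)
    (hcderiv : ∀ t₀ ∈ I, ∀ t ∈ I, HasDerivAt (fun u => c u t₀) (c' t t₀) t)
    (hcderiv2 : ∀ t₀ ∈ I, ∀ t ∈ I, HasDerivAt (fun u => c' u t₀) (-(κ t * c t t₀)) t)
    (hsderiv : ∀ t₀ ∈ I, ∀ t ∈ I, HasDerivAt (fun u => s u t₀) (s' t t₀) t)
    (hsderiv2 : ∀ t₀ ∈ I, ∀ t ∈ I, HasDerivAt (fun u => s' u t₀) (-(κ t * s t t₀)) t)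
    (hcinit : ∀ t₀ ∈ I, c t₀ t₀ = 1) (hcinit' : ∀ t₀ ∈ I, c' t₀ t₀ = 0)
    (hsinit : ∀ t₀ ∈ I, s t₀ t₀ = 0) (hsinit' : ∀ t₀ ∈ I, s' t₀ t₀ = 1)
    (t₀ : ℝ) (ht₀ : t₀ ∈ I) (q₀ : ℝ)
    (J : Set ℝ) (hJI : J ⊆ I)
    (hspos : ∀ t ∈ J, 0 < s t t₀)
    (K : ℝ → ℝ → ℂ)
    (hK : ∀ q t : ℝ, K q t =
      ((Real.sqrt (2 * Real.pi))⁻¹ : ℂ) *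
        Complex.exp (-((Real.pi / 4 : ℝ) : ℂ) * Complex.I) *
        ((Real.sqrt (s t t₀))⁻¹ : ℂ) *
        Complex.exp (Complex.I / (2 * (s t t₀ : ℂ)) *
          ((c t₀ t : ℂ) * (q : ℂ) ^ 2 + (c t t₀ : ℂ) * (q₀ : ℂ) ^ 2
            - 2 * (q : ℂ) * (q₀ : ℂ)))) :
    ∀ q : ℝ, ∀ t ∈ J,
      ContDiff ℝ (⊤ : ℕ∞) (fun q' : ℝ => K q' t) ∧
      DifferentiableAt ℝ (fun t' : ℝ => K q t') t ∧
      Complex.I * deriv (fun t' : ℝ => K q t') t =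
        -(1 / 2 : ℂ) * iteratedDeriv 2 (fun q' : ℝ => K q' t) q +
          (1 / 2 : ℂ) * (κ t : ℂ) * (q : ℂ) ^ 2 * K q t := by
  intro q t ht
  have htI : t ∈ I := hJI ht
  have hcsol : ∀ τ ∈ I, IsTDHOSolution I κ (c · τ) (c' · τ) :=
    fun τ hτ u hu => ⟨hcderiv τ hτ u hu, hcderiv2 τ hτ u hu⟩
  have hssol : ∀ τ ∈ I, IsTDHOSolution I κ (s · τ) (s' · τ) :=
    fun τ hτ u hu => ⟨hsderiv τ hτ u hu, hsderiv2 τ hτ u hu⟩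
  have hW := (hcsol t₀ ht₀).wronskian_eq_one (hssol t₀ ht₀) hIopen hIconn ht₀ (hcinit t₀ ht₀)
    (hcinit' t₀ ht₀) (hsinit t₀ ht₀) (hsinit' t₀ ht₀) htI
  set A : ℂ :=
    ((Real.sqrt (2 * Real.pi))⁻¹ : ℂ) * Complex.exp (-((Real.pi / 4 : ℝ) : ℂ) * Complex.I)
  have hKeq : ∀ q', ∀ u ∈ I, K q' u = tdhoKernel A (s · t₀) (s' · t₀) (c · t₀) q₀ q' u :=
    fun q' u hu => by
      rw [hK, (hcsol u hu).apply_eq_deriv_sine (hcsol t₀ ht₀) (hssol t₀ ht₀) hIopen hIconn hκ ht₀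
        hu (hcinit t₀ ht₀) (hcinit' t₀ ht₀) (hsinit t₀ ht₀) (hsinit' t₀ ht₀) (hcinit u hu)
        (hcinit' u hu), tdhoKernel]
  have hspace : (fun q' => K q' t) = fun q' => tdhoKernel A _ _ _ q₀ q' t :=
    funext fun q' => hKeq q' t htI
  have htime : (fun t' => K q t') =ᶠ[𝓝 t] fun t' => tdhoKernel A _ _ _ q₀ q t' :=
    Filter.eventually_of_mem (hIopen.mem_nhds htI) (hKeq q)
  have hderiv := hasDerivAt_tdhoKernel_time A q₀ q (hsderiv t₀ ht₀ t htI)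
    (hsderiv2 t₀ ht₀ t htI) (hcderiv t₀ ht₀ t htI) (hspos t ht)
  refine ⟨hspace ▸ contDiff_tdhoKernel_space A _ _ _ q₀ t,
    (hderiv.congr_of_eventuallyEq htime).differentiableAt, ?_⟩
  rw [htime.deriv_eq, hspace, hKeq q t htI]
  exact tdhoKernel_schrodinger A κ (γ' := (c' · t₀)) q₀ q (hsderiv t₀ ht₀ t htI)
    (hsderiv2 t₀ ht₀ t htI) (hcderiv t₀ ht₀ t htI) hW (hspos t ht)

/-- The Feynman propagator of the TDHO satisfies the
time-dependent Schrödinger equation away from caustics: with `c, s` the fundamental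
solutions on the open interval `I`, fix `t₀ ∈ I` and `q₀ ∈ ℝ`, let `J ⊆ I` be an
open interval on which `s(t,t₀) > 0`, and let
`K(q,t) = (2π)^{−1/2} e^{−iπ/4} s(t,t₀)^{−1/2} exp((i/(2 s(t,t₀)))(c(t₀,t) q² + c(t,t₀) q₀² − 2 q q₀))`
(with the positive real root `s(t,t₀)^{−1/2}`). Then `K` is smooth in `q`,
differentiable in `t`, and satisfies
`i ∂ₜK = −½ ∂²_q K + ½ κ(t) q² K` on `ℝ × J`. -/
theorem stmt_10
    (I : Set ℝ) (hIopen : IsOpen I) (hIconn : I.OrdConnected)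
    (κ : ℝ → ℝ) (hκ : ContinuousOn κ I)
    (c s c' s' : ℝ → ℝ → ℝ)
    (hcderiv : ∀ t₀ ∈ I, ∀ t ∈ I, HasDerivAt (fun u => c u t₀) (c' t t₀) t)
    (hcderiv2 : ∀ t₀ ∈ I, ∀ t ∈ I, HasDerivAt (fun u => c' u t₀) (-(κ t * c t t₀)) t)
    (hsderiv : ∀ t₀ ∈ I, ∀ t ∈ I, HasDerivAt (fun u => s u t₀) (s' t t₀) t)
    (hsderiv2 : ∀ t₀ ∈ I, ∀ t ∈ I, HasDerivAt (fun u => s' u t₀) (-(κ t * s t t₀)) t)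
    (hcinit : ∀ t₀ ∈ I, c t₀ t₀ = 1) (hcinit' : ∀ t₀ ∈ I, c' t₀ t₀ = 0)
    (hsinit : ∀ t₀ ∈ I, s t₀ t₀ = 0) (hsinit' : ∀ t₀ ∈ I, s' t₀ t₀ = 1)
    (t₀ : ℝ) (ht₀ : t₀ ∈ I) (q₀ : ℝ)
    (J : Set ℝ) (hJopen : IsOpen J) (hJconn : J.OrdConnected) (hJI : J ⊆ I)
    (hspos : ∀ t ∈ J, 0 < s t t₀)
    (K : ℝ → ℝ → ℂ)
    (hK : ∀ q t : ℝ, K q t =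
      ((Real.sqrt (2 * Real.pi))⁻¹ : ℂ) *
        Complex.exp (-((Real.pi / 4 : ℝ) : ℂ) * Complex.I) *
        ((Real.sqrt (s t t₀))⁻¹ : ℂ) *
        Complex.exp (Complex.I / (2 * (s t t₀ : ℂ)) *
          ((c t₀ t : ℂ) * (q : ℂ) ^ 2 + (c t t₀ : ℂ) * (q₀ : ℂ) ^ 2
            - 2 * (q : ℂ) * (q₀ : ℂ)))) :
    ∀ q : ℝ, ∀ t ∈ J,
      ContDiff ℝ (⊤ : ℕ∞) (fun q' : ℝ => K q' t) ∧
      DifferentiableAt ℝ (fun t' : ℝ => K q t') t ∧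
      Complex.I * deriv (fun t' : ℝ => K q t') t =
        -(1 / 2 : ℂ) * iteratedDeriv 2 (fun q' : ℝ => K q' t) q +
          (1 / 2 : ℂ) * (κ t : ℂ) * (q : ℂ) ^ 2 * K q t :=
  stmt_10_general I hIopen hIconn κ hκ c s c' s' hcderiv hcderiv2 hsderiv hsderiv2 hcinit hcinit'
    hsinit hsinit' t₀ ht₀ q₀ J hJI hspos K hK
end

section
/- Let (ρ_ℓ)_{ℓ≥1} be a sequence of positive reals and (ν_ℓ)_{ℓ≥1} a sequence of reals. Then the following three conditions hold simultaneously: (i) ∑_{ℓ≥1} (ν_ℓ/ρ_ℓ)² < ∞, (ii) ∑_{ℓ≥1} (ρ_ℓ·ν_ℓ/ℓ)² < ∞, and (iii) ∑_{ℓ≥1} ( ν_ℓ² + 4ρ_ℓ²/π² − ρ_ℓ⁻² )² < ∞, if and only if ∑_{ℓ≥1} ( ρ_ℓ − √(π/2) )² < ∞ and ∑_{ℓ≥1} ν_ℓ² < ∞ (i.e. ρ_ℓ = √(π/2) + x_ℓ with (x_ℓ) square-summable and (ν_ℓ) square-summable). -/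
/-!
Write `c = √(π/2)` and `g = gowdyDefect` for the `ρ`-part `4 r²/π² - r⁻²` of condition (iii). Since
`c² = π/2`, `g r · π² r² = 4 (r - c)(r + c)(r² + c²)`, so `|r - c| ≤ (π²/4c) |g r|` for every
`r > 0`, while `g r = O(r - c)` near `c` because `g` is differentiable with `g c = 0`.

Forward: (iii) makes `ν² + g ρ` tend to `0`, so eventually `g ρ ≤ 1`, i.e. `ρ ≤ π`, and then (i)
bounds `ν` by `π |ν/ρ|`. Thus `ν ∈ ℓ²`, hence `ν² ∈ ℓ²`, hence `g ρ ∈ ℓ²` and `ρ - c ∈ ℓ²`.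
Backward: `ρ → c ≠ 0`, so `ρ` and `ρ⁻¹` are bounded and each of the three sequences is `O` of
`ν`, `ν²` or `ρ - c`.
-/

open Filter Asymptotics Real Topology

section SquareSummable

variable {ι : Type*} {f g : ι → ℝ}

theorem summable_sq_of_isBigO (hg : Summable fun i => g i ^ 2) (h : f =O[cofinite] g) :
    Summable fun i => f i ^ 2 :=
  summable_of_isBigO hg (h.pow 2)

theorem tendsto_zero_of_summable_sq (hf : Summable fun i => f i ^ 2) :
    Tendsto f cofinite (𝓝 0) := by
  rw [tendsto_zero_iff_abs_tendsto_zero]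
  simpa [Function.comp_def, Real.sqrt_sq_eq_abs] using hf.tendsto_cofinite_zero.sqrt

theorem summable_sq_sq (hf : Summable fun i => f i ^ 2) : Summable fun i => (f i ^ 2) ^ 2 :=
  summable_sq_of_isBigO hf <| by
    simpa [sq] using ((tendsto_zero_of_summable_sq hf).isBigO_one ℝ).mul (isBigO_refl f _)

theorem Summable.sq_add (hf : Summable fun i => f i ^ 2) (hg : Summable fun i => g i ^ 2) :
    Summable fun i => (f i + g i) ^ 2 :=
  ((hf.add hg).mul_left 2).of_nonneg_of_le (fun _ => sq_nonneg _) fun _ => add_sq_le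

theorem Summable.sq_sub (hf : Summable fun i => f i ^ 2) (hg : Summable fun i => g i ^ 2) :
    Summable fun i => (f i - g i) ^ 2 := by
  simpa [sub_eq_add_neg] using hf.sq_add (g := -g) (by simpa using hg)

end SquareSummable

noncomputable def gowdyDefect (r : ℝ) : ℝ := 4 * r ^ 2 / π ^ 2 - (r ^ 2)⁻¹

theorem gowdyDefect_sqrt_pi_div_two : gowdyDefect √(π / 2) = 0 := by
  rw [gowdyDefect, Real.sq_sqrt (by positivity)]
  field_simp
  ring

theorem isBigO_gowdyDefect_nhds : gowdyDefect =O[𝓝 √(π / 2)] (· - √(π / 2)) := by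
  have hd : DifferentiableAt ℝ gowdyDefect √(π / 2) := by
    unfold gowdyDefect
    fun_prop (disch := positivity)
  simpa only [gowdyDefect_sqrt_pi_div_two, sub_zero] using hd.isBigO_sub

theorem gowdyDefect_mul_eq (r : ℝ) (hr : r ≠ 0) :
    gowdyDefect r * (π ^ 2 * r ^ 2) =
      4 * (r - √(π / 2)) * (r + √(π / 2)) * (r ^ 2 + √(π / 2) ^ 2) := by
  have hc : √(π / 2) ^ 2 = π / 2 := Real.sq_sqrt (by positivity)
  rw [gowdyDefect]
  field_simp
  linear_combination (4 * √(π / 2) ^ 2 + 2 * π) * hc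

theorem abs_sub_sqrt_pi_div_two_le {r : ℝ} (hr : 0 < r) :
    4 * √(π / 2) * |r - √(π / 2)| ≤ π ^ 2 * |gowdyDefect r| := by
  have key := congrArg abs (gowdyDefect_mul_eq r hr.ne')
  set c := √(π / 2)
  have hc : 0 < c := by positivity
  have hcr : c * r ^ 2 ≤ (r + c) * (r ^ 2 + c ^ 2) := by nlinarith [pow_pos hc 3, sq_nonneg r]
  rw [abs_mul, abs_of_pos (by positivity : 0 < π ^ 2 * r ^ 2),
    show 4 * (r - c) * (r + c) * (r ^ 2 + c ^ 2) = (r - c) * (4 * ((r + c) * (r ^ 2 + c ^ 2))) by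
      ring,
    abs_mul, abs_of_pos (by positivity : 0 < 4 * ((r + c) * (r ^ 2 + c ^ 2)))] at key
  refine le_of_mul_le_mul_right ?_ (pow_pos hr 2)
  nlinarith [mul_le_mul_of_nonneg_left hcr (abs_nonneg (r - c))]

theorem isBigO_sub_gowdyDefect : (· - √(π / 2)) =O[𝓟 (Set.Ioi 0)] gowdyDefect := by
  refine IsBigO.of_bound (π ^ 2 / (4 * √(π / 2))) (eventually_principal.2 fun r hr => ?_)
  rw [Real.norm_eq_abs, Real.norm_eq_abs, div_mul_eq_mul_div, le_div_iff₀ (by positivity),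
    mul_comm]
  exact abs_sub_sqrt_pi_div_two_le hr

theorem le_pi_of_gowdyDefect_le_one {r : ℝ} (hr : 0 < r) (h : gowdyDefect r ≤ 1) : r ≤ π := by
  by_contra! hπr
  have h4 : 4 < 4 * r ^ 2 / π ^ 2 := by
    rw [lt_div_iff₀ (by positivity)]
    nlinarith [pi_pos]
  have h1 : (r ^ 2)⁻¹ < 1 := inv_lt_one_of_one_lt₀ (by nlinarith [pi_gt_three])
  rw [gowdyDefect] at h
  linarith

/-- Let `(ρ_ℓ)_{ℓ≥1}` be a sequence of positive reals and
`(ν_ℓ)_{ℓ≥1}` a sequence of reals (here realized as `ρ, ν : ℕ → ℝ` evaluated at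
indices `ℓ + 1 ≥ 1`). Then the three conditions
(i) `∑ (ν_ℓ/ρ_ℓ)² < ∞`, (ii) `∑ (ρ_ℓ ν_ℓ/ℓ)² < ∞`, and
(iii) `∑ (ν_ℓ² + 4ρ_ℓ²/π² − ρ_ℓ⁻²)² < ∞` hold simultaneously if and only if
`∑ (ρ_ℓ − √(π/2))² < ∞` and `∑ ν_ℓ² < ∞`, i.e. `ρ_ℓ = √(π/2) + x_ℓ` with `(x_ℓ)`
square-summable and `(ν_ℓ)` square-summable. -/
theorem stmt_16
    (ρ ν : ℕ → ℝ) (hρpos : ∀ ℓ : ℕ, 0 < ρ (ℓ + 1)) :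
    ((Summable fun ℓ : ℕ => (ν (ℓ + 1) / ρ (ℓ + 1)) ^ 2) ∧
     (Summable fun ℓ : ℕ => (ρ (ℓ + 1) * ν (ℓ + 1) / ((ℓ : ℝ) + 1)) ^ 2) ∧
     (Summable fun ℓ : ℕ =>
        (ν (ℓ + 1) ^ 2 + 4 * ρ (ℓ + 1) ^ 2 / Real.pi ^ 2 - (ρ (ℓ + 1) ^ 2)⁻¹) ^ 2)) ↔
    ((Summable fun ℓ : ℕ => (ρ (ℓ + 1) - Real.sqrt (Real.pi / 2)) ^ 2) ∧
     (Summable fun ℓ : ℕ => ν (ℓ + 1) ^ 2)) := by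
  simp only [add_sub_assoc, ← gowdyDefect.eq_1]
  constructor
  · rintro ⟨hi, -, hiii⟩
    have hρπ : ∀ᶠ ℓ in cofinite, ρ (ℓ + 1) ≤ π := by
      filter_upwards [(tendsto_zero_of_summable_sq hiii).eventually_le_const one_pos] with ℓ hℓ
      exact le_pi_of_gowdyDefect_le_one (hρpos ℓ) (by nlinarith [sq_nonneg (ν (ℓ + 1))])
    have hν : Summable fun ℓ => ν (ℓ + 1) ^ 2 := by
      refine summable_sq_of_isBigO hi (IsBigO.of_bound π ?_)
      filter_upwards [hρπ] with ℓ hℓ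
      rw [norm_div, Real.norm_of_nonneg (hρpos ℓ).le, mul_div_assoc', le_div_iff₀ (hρpos ℓ),
        mul_comm π]
      exact mul_le_mul_of_nonneg_left hℓ (norm_nonneg _)
    have hg : Summable fun ℓ => gowdyDefect (ρ (ℓ + 1)) ^ 2 := by
      simpa using hiii.sq_sub (summable_sq_sq hν)
    have hρ : Tendsto (fun ℓ => ρ (ℓ + 1)) cofinite (𝓟 (Set.Ioi 0)) :=
      tendsto_principal.2 (Eventually.of_forall hρpos)
    exact ⟨summable_sq_of_isBigO hg (isBigO_sub_gowdyDefect.comp_tendsto hρ), hν⟩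
  · rintro ⟨hx, hν⟩
    have hρ : Tendsto (fun ℓ => ρ (ℓ + 1)) cofinite (𝓝 √(π / 2)) :=
      tendsto_sub_nhds_zero_iff.1 (tendsto_zero_of_summable_sq hx)
    have hinv : Tendsto (fun ℓ : ℕ => ((ℓ : ℝ) + 1)⁻¹) cofinite (𝓝 0) := by
      simpa [Nat.cofinite_eq_atTop, one_div] using
        tendsto_one_div_add_atTop_nhds_zero_nat (𝕜 := ℝ)
    have hg : Summable fun ℓ => gowdyDefect (ρ (ℓ + 1)) ^ 2 :=
      summable_sq_of_isBigO hx (isBigO_gowdyDefect_nhds.comp_tendsto hρ)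
    refine ⟨summable_sq_of_isBigO hν ?_, summable_sq_of_isBigO hν ?_, (summable_sq_sq hν).sq_add hg⟩
    · simpa [div_eq_mul_inv] using
        (isBigO_refl (fun ℓ => ν (ℓ + 1)) _).mul ((hρ.inv₀ (by positivity)).isBigO_one ℝ)
    · simpa [div_eq_mul_inv, mul_comm] using
        ((hρ.isBigO_one ℝ).mul (isBigO_refl (fun ℓ => ν (ℓ + 1)) _)).mul (hinv.isBigO_one ℝ)
end
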